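/- arXiv:1107.3228 — 11 statements merged into one kernel-verified Lean document; each statement's English description precedes it below -/
import Mathlib

section
/- Let X, Y, Z be symmetric d×d real matrices such that ⟨Xz, z⟩ − ⟨Yz', z'⟩ ≤ ⟨Z(z−z'), z−z'⟩ for all z, z' ∈ ℝ^d, and let 0 < ε < (max(‖X‖, ‖Y‖, 2‖Z‖))⁻¹, where ‖·‖ is the operator norm. For a symmetric matrix A define the sup-convolution A^ε(z) := sup_{ξ∈ℝ^d} (⟨Aξ, ξ⟩ − ε⁻¹‖z−ξ‖²) and the inf-convolution A_ε(z) := inf_{ξ∈ℝ^d} (⟨Aξ, ξ⟩ + ε⁻¹‖z−ξ‖²). Then all these suprema and infima are finite, and: (i) for all ζ, α ∈ ℝ^d, X^ε(ζ) − Y_ε(α) ≤ Z^{2ε}(ζ−α); (ii) for all z ∈ ℝ^d, −ε⁻¹‖z‖² ≤ X^ε(z), ⟨Xz, z⟩ ≤ X^ε(z), Y_ε(z) ≤ ⟨Yz, z⟩, and Y_ε(z) ≤ ε⁻¹‖z‖². -/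
open Matrix

/-- The sup-convolution of the quadratic form of a symmetric matrix `A`:
`A^ε(z) = sup_{ξ} (⟨Aξ, ξ⟩ − ε⁻¹‖z−ξ‖²)`. -/
noncomputable def supConvQF {d : ℕ} (A : Matrix (Fin d) (Fin d) ℝ) (ε : ℝ)
    (z : EuclideanSpace ℝ (Fin d)) : ℝ :=
  sSup {y : ℝ | ∃ ξ : EuclideanSpace ℝ (Fin d), y = A.mulVec ξ ⬝ᵥ ξ - ε⁻¹ * ‖z - ξ‖ ^ 2}

/-- The inf-convolution of the quadratic form of a symmetric matrix `A`:
`A_ε(z) = inf_{ξ} (⟨Aξ, ξ⟩ + ε⁻¹‖z−ξ‖²)`. -/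
noncomputable def infConvQF {d : ℕ} (A : Matrix (Fin d) (Fin d) ℝ) (ε : ℝ)
    (z : EuclideanSpace ℝ (Fin d)) : ℝ :=
  sInf {y : ℝ | ∃ ξ : EuclideanSpace ℝ (Fin d), y = A.mulVec ξ ⬝ᵥ ξ + ε⁻¹ * ‖z - ξ‖ ^ 2}

/-! The penalty `ε⁻¹‖z - ξ‖²` dominates the quadratic form `⟨Aξ, ξ⟩` as soon as `‖A‖ < ε⁻¹`,
so all the convolutions are finite. For (i), take competitors `ξ` for `X^ε(ζ)` and `η` for
`Y_ε(α)`: the hypothesis at `(ξ, η)` together with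
`‖(ζ - α) - (ξ - η)‖² ≤ 2‖ζ - ξ‖² + 2‖α - η‖²` shows that `ξ - η` is a competitor for
`Z^{2ε}(ζ - α)` whose value dominates the difference. The bounds (ii) come from the competitors
`ξ = 0` and `ξ = z`. -/

open RealInnerProductSpace

theorem Matrix.abs_mulVec_dotProduct_self_le {n : Type*} [Fintype n] [DecidableEq n]
    (A : Matrix n n ℝ) (ξ : EuclideanSpace ℝ n) :
    |A *ᵥ ξ ⬝ᵥ ξ| ≤ ‖toEuclideanCLM (𝕜 := ℝ) A‖ * ‖ξ‖ ^ 2 := by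
  rw [dotProduct_comm, ← inner_toEuclideanCLM]
  calc |⟪ξ, toEuclideanCLM (𝕜 := ℝ) A ξ⟫| ≤ ‖ξ‖ * ‖toEuclideanCLM (𝕜 := ℝ) A ξ‖ :=
        abs_real_inner_le_norm _ _
    _ ≤ ‖ξ‖ * (‖toEuclideanCLM (𝕜 := ℝ) A‖ * ‖ξ‖) := by
        gcongr; exact ContinuousLinearMap.le_opNorm _ _
    _ = ‖toEuclideanCLM (𝕜 := ℝ) A‖ * ‖ξ‖ ^ 2 := by ring

section Convolution

variable {E : Type*} [SeminormedAddCommGroup E]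

def supConvSet (f : E → ℝ) (ε : ℝ) (z : E) : Set ℝ :=
  {y | ∃ ξ, y = f ξ - ε⁻¹ * ‖z - ξ‖ ^ 2}

def infConvSet (f : E → ℝ) (ε : ℝ) (z : E) : Set ℝ :=
  {y | ∃ ξ, y = f ξ + ε⁻¹ * ‖z - ξ‖ ^ 2}

/-- `c * b / (b - c)` is the maximum over `m ≥ 0` of `c * (1 + m) ^ 2 - b * m ^ 2`. -/
theorem mul_norm_sq_sub_mul_norm_sub_sq_le {c b : ℝ} (hc : 0 ≤ c) (hcb : c < b) (z ξ : E) :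
    c * ‖ξ‖ ^ 2 - b * ‖z - ξ‖ ^ 2 ≤ c * b / (b - c) * ‖z‖ ^ 2 := by
  have hξ : ‖ξ‖ ≤ ‖z‖ + ‖z - ξ‖ := by simpa using norm_sub_le z (z - ξ)
  have hξ2 : c * ‖ξ‖ ^ 2 ≤ c * (‖z‖ + ‖z - ξ‖) ^ 2 := by gcongr
  rw [div_mul_eq_mul_div, le_div_iff₀ (sub_pos.mpr hcb)]
  nlinarith [sq_nonneg ((b - c) * ‖z - ξ‖ - c * ‖z‖), norm_nonneg z, norm_nonneg (z - ξ),
    mul_le_mul_of_nonneg_left hξ2 (sub_pos.mpr hcb).le]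

variable {f : E → ℝ} {c ε : ℝ}

theorem bddAbove_supConvSet (hf : ∀ ξ, f ξ ≤ c * ‖ξ‖ ^ 2) (hc : 0 ≤ c) (hcε : c < ε⁻¹)
    (z : E) : BddAbove (supConvSet f ε z) := by
  refine ⟨c * ε⁻¹ / (ε⁻¹ - c) * ‖z‖ ^ 2, ?_⟩
  rintro _ ⟨ξ, rfl⟩
  linarith [hf ξ, mul_norm_sq_sub_mul_norm_sub_sq_le hc hcε z ξ]

theorem bddBelow_infConvSet (hf : ∀ ξ, -(c * ‖ξ‖ ^ 2) ≤ f ξ) (hc : 0 ≤ c) (hcε : c < ε⁻¹)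
    (z : E) : BddBelow (infConvSet f ε z) := by
  refine ⟨-(c * ε⁻¹ / (ε⁻¹ - c) * ‖z‖ ^ 2), ?_⟩
  rintro _ ⟨ξ, rfl⟩
  linarith [hf ξ, mul_norm_sq_sub_mul_norm_sub_sq_le hc hcε z ξ]

theorem inv_two_mul_mul_norm_sub_sq_le (hε : 0 ≤ ε) (a b : E) :
    (2 * ε)⁻¹ * ‖a - b‖ ^ 2 ≤ ε⁻¹ * ‖a‖ ^ 2 + ε⁻¹ * ‖b‖ ^ 2 := by
  have hab : ‖a - b‖ ^ 2 ≤ 2 * (‖a‖ ^ 2 + ‖b‖ ^ 2) :=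
    (pow_le_pow_left₀ (norm_nonneg _) (norm_sub_le a b) 2).trans add_sq_le
  rw [mul_inv]
  nlinarith [inv_nonneg.mpr hε]

theorem sSup_supConvSet_sub_sInf_infConvSet_le {g k : E → ℝ}
    (hfgk : ∀ ξ η, f ξ - g η ≤ k (ξ - η)) (hε : 0 ≤ ε) (ζ α : E)
    (hk : BddAbove (supConvSet k (2 * ε) (ζ - α))) :
    sSup (supConvSet f ε ζ) - sInf (infConvSet g ε α) ≤ sSup (supConvSet k (2 * ε) (ζ - α)) := by
  rw [sub_le_iff_le_add]
  refine csSup_le ⟨_, ζ, rfl⟩ ?_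
  rintro _ ⟨ξ, rfl⟩
  rw [← sub_le_iff_le_add']
  refine le_csInf ⟨_, α, rfl⟩ ?_
  rintro _ ⟨η, rfl⟩
  have hkξη := le_csSup hk ⟨ξ - η, rfl⟩
  have hpen := inv_two_mul_mul_norm_sub_sq_le hε (ζ - ξ) (α - η)
  rw [show ζ - ξ - (α - η) = ζ - α - (ξ - η) by abel] at hpen
  linarith [hfgk ξ η]

end Convolution

theorem supInfConv_matrix_inequality_general {d : ℕ} (X Y Z : Matrix (Fin d) (Fin d) ℝ)
    (h : ∀ z z' : EuclideanSpace ℝ (Fin d),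
      X.mulVec z ⬝ᵥ z - Y.mulVec z' ⬝ᵥ z' ≤ Z.mulVec (z - z') ⬝ᵥ (z - z'))
    (ε : ℝ) (hε0 : 0 < ε)
    (hε : ε < (max (max ‖Matrix.toEuclideanCLM (𝕜 := ℝ) X‖ ‖Matrix.toEuclideanCLM (𝕜 := ℝ) Y‖)
        (2 * ‖Matrix.toEuclideanCLM (𝕜 := ℝ) Z‖))⁻¹) :
    (∀ z : EuclideanSpace ℝ (Fin d),
        BddAbove {y : ℝ | ∃ ξ : EuclideanSpace ℝ (Fin d),
          y = X.mulVec ξ ⬝ᵥ ξ - ε⁻¹ * ‖z - ξ‖ ^ 2} ∧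
        BddBelow {y : ℝ | ∃ ξ : EuclideanSpace ℝ (Fin d),
          y = Y.mulVec ξ ⬝ᵥ ξ + ε⁻¹ * ‖z - ξ‖ ^ 2} ∧
        BddAbove {y : ℝ | ∃ ξ : EuclideanSpace ℝ (Fin d),
          y = Z.mulVec ξ ⬝ᵥ ξ - (2 * ε)⁻¹ * ‖z - ξ‖ ^ 2}) ∧
    (∀ ζ α : EuclideanSpace ℝ (Fin d),
        supConvQF X ε ζ - infConvQF Y ε α ≤ supConvQF Z (2 * ε) (ζ - α)) ∧
    (∀ z : EuclideanSpace ℝ (Fin d),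
        -ε⁻¹ * ‖z‖ ^ 2 ≤ supConvQF X ε z ∧
        X.mulVec z ⬝ᵥ z ≤ supConvQF X ε z ∧
        infConvQF Y ε z ≤ Y.mulVec z ⬝ᵥ z ∧
        infConvQF Y ε z ≤ ε⁻¹ * ‖z‖ ^ 2) := by
  have hM := lt_inv_of_lt_inv₀ hε0 hε
  have hXε := ((le_max_left _ _).trans (le_max_left _ _)).trans_lt hM
  have hYε := ((le_max_right _ _).trans (le_max_left _ _)).trans_lt hM
  have hZε : ‖toEuclideanCLM (𝕜 := ℝ) Z‖ < (2 * ε)⁻¹ := by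
    have := (le_max_right _ _).trans_lt hM
    rw [mul_inv]
    linarith
  have bddX := bddAbove_supConvSet
    (fun ξ ↦ (le_abs_self _).trans (abs_mulVec_dotProduct_self_le X ξ)) (norm_nonneg _) hXε
  have bddY := bddBelow_infConvSet (fun ξ ↦ neg_le_of_abs_le (abs_mulVec_dotProduct_self_le Y ξ))
    (norm_nonneg _) hYε
  have bddZ := bddAbove_supConvSet
    (fun ξ ↦ (le_abs_self _).trans (abs_mulVec_dotProduct_self_le Z ξ)) (norm_nonneg _) hZε
  refine ⟨fun z ↦ ⟨bddX z, bddY z, bddZ z⟩,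
    fun ζ α ↦ sSup_supConvSet_sub_sInf_infConvSet_le h hε0.le ζ α (bddZ _),
    fun z ↦ ⟨?_, ?_, ?_, ?_⟩⟩
  · simpa [supConvQF, supConvSet] using le_csSup (bddX z) ⟨0, rfl⟩
  · simpa [supConvQF, supConvSet] using le_csSup (bddX z) ⟨z, rfl⟩
  · simpa [infConvQF, infConvSet] using csInf_le (bddY z) ⟨z, rfl⟩
  · simpa [infConvQF, infConvSet] using csInf_le (bddY z) ⟨0, rfl⟩

/-- **Sup/inf convolutions of matrices preserve the matrix inequality.**
If symmetric matrices `X, Y, Z` satisfy `⟨Xz, z⟩ − ⟨Yz', z'⟩ ≤ ⟨Z(z−z'), z−z'⟩` and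
`0 < ε < (max(‖X‖, ‖Y‖, 2‖Z‖))⁻¹` (operator norms), then all the sup/inf convolutions are
finite, `X^ε(ζ) − Y_ε(α) ≤ Z^{2ε}(ζ−α)`, and the monotonicity bounds hold. -/
theorem supInfConv_matrix_inequality {d : ℕ} (X Y Z : Matrix (Fin d) (Fin d) ℝ)
    (hX : X.IsSymm) (hY : Y.IsSymm) (hZ : Z.IsSymm)
    (h : ∀ z z' : EuclideanSpace ℝ (Fin d),
      X.mulVec z ⬝ᵥ z - Y.mulVec z' ⬝ᵥ z' ≤ Z.mulVec (z - z') ⬝ᵥ (z - z'))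
    (ε : ℝ) (hε0 : 0 < ε)
    (hε : ε < (max (max ‖Matrix.toEuclideanCLM (𝕜 := ℝ) X‖ ‖Matrix.toEuclideanCLM (𝕜 := ℝ) Y‖)
        (2 * ‖Matrix.toEuclideanCLM (𝕜 := ℝ) Z‖))⁻¹) :
    (∀ z : EuclideanSpace ℝ (Fin d),
        BddAbove {y : ℝ | ∃ ξ : EuclideanSpace ℝ (Fin d),
          y = X.mulVec ξ ⬝ᵥ ξ - ε⁻¹ * ‖z - ξ‖ ^ 2} ∧
        BddBelow {y : ℝ | ∃ ξ : EuclideanSpace ℝ (Fin d),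
          y = Y.mulVec ξ ⬝ᵥ ξ + ε⁻¹ * ‖z - ξ‖ ^ 2} ∧
        BddAbove {y : ℝ | ∃ ξ : EuclideanSpace ℝ (Fin d),
          y = Z.mulVec ξ ⬝ᵥ ξ - (2 * ε)⁻¹ * ‖z - ξ‖ ^ 2}) ∧
    (∀ ζ α : EuclideanSpace ℝ (Fin d),
        supConvQF X ε ζ - infConvQF Y ε α ≤ supConvQF Z (2 * ε) (ζ - α)) ∧
    (∀ z : EuclideanSpace ℝ (Fin d),
        -ε⁻¹ * ‖z‖ ^ 2 ≤ supConvQF X ε z ∧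
        X.mulVec z ⬝ᵥ z ≤ supConvQF X ε z ∧
        infConvQF Y ε z ≤ Y.mulVec z ⬝ᵥ z ∧
        infConvQF Y ε z ≤ ε⁻¹ * ‖z‖ ^ 2) :=
  supInfConv_matrix_inequality_general X Y Z h ε hε0 hε
end

section
/- Let α > 0, ω ≥ 1, let â ∈ ℝ^d be a unit vector, and let X, Y be symmetric d×d real matrices such that for all z, z' ∈ ℝ^d, ⟨Xz, z⟩ − ⟨Yz', z'⟩ ≤ (2/α)(‖z−z'‖² − (2ω/(1+ω))⟨â, z−z'⟩²). Then trace(X − Y) ≤ −8(ω−1)/(α(ω+1)). -/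
/-!
Test the inequality at `z = eᵢ, z' = H eᵢ` and at the swapped pair, where `H = 1 - 2 â âᵀ` is
the reflection in `â⊥`. Since `H` is orthogonal, summing over `i` turns both sums of quadratic
forms into `trace X - trace Y`. On the right `z - z' = 2 âᵢ â`, along which the bound is
`(8/α)(1 - 2ω/(1+ω)) âᵢ²`, and `∑ âᵢ² = 1`.
-/

open Matrix RealInnerProductSpace

namespace Matrix

section Trace

variable {n : Type*} [Fintype n]

theorem sum_mulVec_col_dotProduct_col (M R : Matrix n n ℝ) :
    ∑ i, M *ᵥ R.col i ⬝ᵥ R.col i = trace (Rᵀ * M * R) := by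
  simp only [trace, diag, mul_mul_apply, dotProduct_comm (M *ᵥ _)]
  rfl

theorem sum_mulVec_col_dotProduct_col_of_mul_transpose_eq_one [DecidableEq n] (M : Matrix n n ℝ)
    {R : Matrix n n ℝ} (hR : R * Rᵀ = 1) :
    ∑ i, M *ᵥ R.col i ⬝ᵥ R.col i = trace M := by
  rw [sum_mulVec_col_dotProduct_col, trace_mul_cycle, hR, Matrix.one_mul]

theorem two_mul_trace_sub_le_of_mulVec_dotProduct_sub_le [DecidableEq n] (X Y : Matrix n n ℝ)
    {R S : Matrix n n ℝ} (hR : R * Rᵀ = 1) (hS : S * Sᵀ = 1) (φ : (n → ℝ) → ℝ)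
    (h : ∀ z z', X *ᵥ z ⬝ᵥ z - Y *ᵥ z' ⬝ᵥ z' ≤ φ (z - z')) :
    2 * trace (X - Y) ≤ ∑ i, (φ (R.col i - S.col i) + φ (S.col i - R.col i)) := by
  calc 2 * trace (X - Y)
      = ∑ i, ((X *ᵥ R.col i ⬝ᵥ R.col i - Y *ᵥ S.col i ⬝ᵥ S.col i)
          + (X *ᵥ S.col i ⬝ᵥ S.col i - Y *ᵥ R.col i ⬝ᵥ R.col i)) := by
        simp only [Finset.sum_add_distrib, Finset.sum_sub_distrib,
          sum_mulVec_col_dotProduct_col_of_mul_transpose_eq_one _ hR,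
          sum_mulVec_col_dotProduct_col_of_mul_transpose_eq_one _ hS, trace_sub]
        ring
    _ ≤ _ := Finset.sum_le_sum fun i _ => add_le_add (h _ _) (h _ _)

end Trace

section Householder

variable {n α : Type*} [DecidableEq n] [CommRing α]

def householder (a : n → α) : Matrix n n α := 1 - (2 : α) • vecMulVec a a

theorem householder_transpose (a : n → α) : (householder a)ᵀ = householder a := by
  simp [householder, transpose_vecMulVec]

theorem householder_mul_self [Fintype n] {a : n → α} (ha : a ⬝ᵥ a = 1) :
    householder a * householder a = 1 := by
  simp only [householder, sub_mul, mul_sub, Matrix.one_mul, Matrix.mul_one, Matrix.smul_mul,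
    Matrix.mul_smul, vecMulVec_mul_vecMulVec, ha, one_smul]
  module

theorem col_one_sub_col_householder (a : n → α) (i : n) :
    (1 : Matrix n n α).col i - (householder a).col i = (2 * a i) • a := by
  ext j
  simp only [householder, Pi.sub_apply, col_apply, sub_apply, smul_apply, vecMulVec_apply,
    smul_eq_mul, sub_sub_cancel, Pi.smul_apply]
  ring

end Householder

end Matrix

theorem EuclideanSpace.ofLp_dotProduct_ofLp_self {n : Type*} [Fintype n]
    (x : EuclideanSpace ℝ n) :
    WithLp.ofLp x ⬝ᵥ WithLp.ofLp x = ‖x‖ ^ 2 := by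
  rw [← real_inner_self_eq_norm_sq, EuclideanSpace.inner_eq_star_dotProduct, star_trivial]

theorem trace_estimate_from_matrix_inequality_general {d : ℕ}
    (α ω : ℝ) (hω : 1 ≤ ω)
    (a_hat : EuclideanSpace ℝ (Fin d)) (ha : ‖a_hat‖ = 1)
    (X Y : Matrix (Fin d) (Fin d) ℝ)
    (h : ∀ z z' : EuclideanSpace ℝ (Fin d),
      X.mulVec z ⬝ᵥ z - Y.mulVec z' ⬝ᵥ z'
        ≤ (2 / α) * (‖z - z'‖ ^ 2 - (2 * ω / (1 + ω)) * ⟪a_hat, z - z'⟫ ^ 2)) :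
    (X - Y).trace ≤ -(8 * (ω - 1)) / (α * (ω + 1)) := by
  set q := 2 * ω / (1 + ω)
  set a : Fin d → ℝ := WithLp.ofLp a_hat
  have ha' : a ⬝ᵥ a = 1 := by rw [EuclideanSpace.ofLp_dotProduct_ofLp_self, ha, one_pow]
  let φ (v : Fin d → ℝ) : ℝ :=
    (2 / α) * (‖WithLp.toLp 2 v‖ ^ 2 - q * ⟪a_hat, WithLp.toLp 2 v⟫ ^ 2)
  have hφ (c : ℝ) : φ (c • a) = 2 / α * (1 - q) * c ^ 2 := by
    simp only [φ, a, WithLp.toLp_smul, WithLp.toLp_ofLp, norm_smul, inner_smul_right,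
      real_inner_self_eq_norm_sq, ha, one_pow, mul_one, Real.norm_eq_abs, sq_abs]
    ring
  have hH : householder a * (householder a)ᵀ = 1 := by
    rw [householder_transpose, householder_mul_self ha']
  have key := two_mul_trace_sub_le_of_mulVec_dotProduct_sub_le X Y
    (by rw [transpose_one, Matrix.mul_one]) hH φ fun z z' => by
      simpa [φ] using h (WithLp.toLp 2 z) (WithLp.toLp 2 z')
  have hcol (i : Fin d) :
      (householder a).col i - (1 : Matrix _ _ ℝ).col i = (-(2 * a i)) • a := by
    rw [← neg_sub, col_one_sub_col_householder, neg_smul]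
  simp only [col_one_sub_col_householder, hcol, hφ] at key
  have hsum : ∑ i, (2 / α * (1 - q) * (2 * a i) ^ 2 + 2 / α * (1 - q) * (-(2 * a i)) ^ 2)
      = 16 / α * (1 - q) * (a ⬝ᵥ a) := by
    rw [dotProduct, Finset.mul_sum]
    exact Finset.sum_congr rfl fun i _ => by ring
  have hq : 16 / α * (1 - q) = 2 * (-(8 * (ω - 1)) / (α * (ω + 1))) := by
    rw [one_sub_div (by linarith), ← div_div]
    ring
  rw [hsum, ha', mul_one, hq] at key
  linarith

/-- **Trace estimate from the matrix inequality with `Z^{α/2} = (2/α)(I − (2ω/(1+ω)) â⊗â)`.**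
If `α > 0`, `ω ≥ 1`, `â` is a unit vector, and symmetric matrices `X, Y` satisfy
`⟨Xz, z⟩ − ⟨Yz', z'⟩ ≤ (2/α)(‖z−z'‖² − (2ω/(1+ω))⟨â, z−z'⟩²)` for all `z, z'`,
then `trace(X − Y) ≤ −8(ω−1)/(α(ω+1))`. -/
theorem trace_estimate_from_matrix_inequality {d : ℕ}
    (α ω : ℝ) (hα : 0 < α) (hω : 1 ≤ ω)
    (a_hat : EuclideanSpace ℝ (Fin d)) (ha : ‖a_hat‖ = 1)
    (X Y : Matrix (Fin d) (Fin d) ℝ) (hX : X.IsSymm) (hY : Y.IsSymm)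
    (h : ∀ z z' : EuclideanSpace ℝ (Fin d),
      X.mulVec z ⬝ᵥ z - Y.mulVec z' ⬝ᵥ z'
        ≤ (2 / α) * (‖z - z'‖ ^ 2 - (2 * ω / (1 + ω)) * ⟪a_hat, z - z'⟫ ^ 2)) :
    (X - Y).trace ≤ -(8 * (ω - 1)) / (α * (ω + 1)) :=
  trace_estimate_from_matrix_inequality_general α ω hω a_hat ha X Y h
end

section
/- Let d = d₁ + d₂, let u : ℝ^{d₁} × ℝ^{d₂} → ℝ be continuous and ℤ^{d₁} × ℤ^{d₂}-periodic, and let φ : ℝ^{d₁} → ℝ be continuous with φ(z) → +∞ as ‖z‖ → ∞. For ε > 0 and x = (x₁,x₂), y = (y₁,y₂) set ψ_ε(x,y) := u(x) − u(y) − φ(x₁−y₁) − ε⁻²‖x₂−y₂‖², and set M := sup { u(x₁,x₂) − u(y₁,x₂) − φ(x₁−y₁) : x₁, y₁ ∈ ℝ^{d₁}, x₂ ∈ ℝ^{d₂} }. Then for each ε > 0 the function ψ_ε attains its global maximum M^ε at some point (x^ε, y^ε) with x^ε ∈ [0,1]^d, and for any such choice of maximizers there exist a sequence ε_n → 0⁺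 and a point (x̄, ȳ) with x̄₂ = ȳ₂ such that M^{ε_n} → M, ε_n⁻²‖x₂^{ε_n} − y₂^{ε_n}‖² → 0, (x^{ε_n}, y^{ε_n}) → (x̄, ȳ), and u(x̄₁, x̄₂) − u(ȳ₁, x̄₂) − φ(x̄₁ − ȳ₁) = M. -/
/-!
Periodicity moves any pair `(x, y)` so that `x` lies in the unit cube without changing `ψ_ε`.
On such pairs with `ψ_ε(x, y) ≥ ψ_ε(x, x) = -φ 0`, boundedness of `u` and coercivity of `φ`
confine `x₁ - y₁` to a compact set and the penalty confines `x₂ - y₂` to a ball of radius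
`O(ε)`, so `ψ_ε` attains its maximum there; for `ε ≤ 1` all these sets lie in the one for
`ε = 1`, which gives a convergent subsequence of maximizers. Comparing a maximizer `(x, y)`
with `(x, (y₁, x₂))` bounds the penalty by `u(y₁, x₂) - u(y)`: this is at most `2 sup |u|`,
forcing `x₂ - y₂ → 0`, and then tends to `0`. Finally `M ≤ ψ_ε(x^ε, y^ε)` passes to the limit,
whose value is itself one of the numbers with supremum `M`.
-/

open Filter Set Topology Metric

lemma isCompact_setOf_le_of_tendsto_cocompact {X : Type*} [TopologicalSpace X] {f : X → ℝ}
    (hf : Continuous f) (hlim : Tendsto f (cocompact X) atTop) (a : ℝ) :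
    IsCompact {z | f z ≤ a} := by
  obtain ⟨t, ht, hsub⟩ := mem_cocompact.mp (hlim.eventually (eventually_gt_atTop a))
  refine ht.of_isClosed_subset (isClosed_le hf continuous_const) fun z hz => ?_
  by_contra hzt
  exact (hsub hzt).not_ge (show f z ≤ a from hz)

lemma IsCompact.exists_forall_le_of_forall_exists_le {X : Type*} [TopologicalSpace X]
    [Nonempty X] {f : X → ℝ} {s : Set X} (hs : IsCompact s) (hf : ContinuousOn f s)
    (h : ∀ x, ∃ y ∈ s, f x ≤ f y) : ∃ x ∈ s, ∀ y, f y ≤ f x := by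
  obtain ⟨x₀⟩ := ‹Nonempty X›
  obtain ⟨y₀, hy₀, -⟩ := h x₀
  obtain ⟨x, hx, hmax⟩ := hs.exists_isMaxOn ⟨y₀, hy₀⟩ hf
  refine ⟨x, hx, fun y => ?_⟩
  obtain ⟨z, hz, hyz⟩ := h y
  exact hyz.trans (hmax hz)

def ContainsPeriodicReps {X : Type*} [Add X] (u : X → ℝ) (K : Set X) : Prop :=
  ∀ x, ∃ v, x + v ∈ K ∧ ∀ z, u (z + v) = u z

lemma ContainsPeriodicReps.exists_abs_le {X : Type*} [TopologicalSpace X] [Add X]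
    {u : X → ℝ} {K : Set X} (h : ContainsPeriodicReps u K) (hK : IsCompact K)
    (hu : ContinuousOn u K) : ∃ C, ∀ x, |u x| ≤ C := by
  obtain ⟨C, hC⟩ := hK.exists_bound_of_continuousOn hu
  refine ⟨C, fun x => ?_⟩
  obtain ⟨v, hxv, hv⟩ := h x
  rw [← hv x]
  exact hC _ hxv

section Penalization

variable {E₁ E₂ : Type*} [NormedAddCommGroup E₁] [NormedAddCommGroup E₂]
  {u : E₁ × E₂ → ℝ} {φ : E₁ → ℝ} {K : Set (E₁ × E₂)} {ε : ℝ}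

variable (u φ) in
noncomputable def penalized (ε : ℝ) (x y : E₁ × E₂) : ℝ :=
  u x - u y - φ (x.1 - y.1) - (ε ^ 2)⁻¹ * ‖x.2 - y.2‖ ^ 2

variable (u φ) in
def unpenalizedValues : Set ℝ :=
  {m | ∃ (x₁ y₁ : E₁) (x₂ : E₂), m = u (x₁, x₂) - u (y₁, x₂) - φ (x₁ - y₁)}

@[simp]
lemma penalized_self (x : E₁ × E₂) : penalized u φ ε x x = -φ 0 := by
  simp [penalized]

lemma penalized_of_snd_eq (x : E₁ × E₂) (y₁ : E₁) :
    penalized u φ ε x (y₁, x.2) = u x - u (y₁, x.2) - φ (x.1 - y₁) := by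
  simp [penalized]

lemma penalized_add_add {v : E₁ × E₂} (hv : ∀ z, u (z + v) = u z) (x y : E₁ × E₂) :
    penalized u φ ε (x + v) (y + v) = penalized u φ ε x y := by
  simp only [penalized, hv, Prod.fst_add, Prod.snd_add, add_sub_add_right_eq_sub]

lemma penalized_le_penalized_of_le {ε' : ℝ} (hε : 0 < ε) (hεε' : ε ≤ ε') (x y : E₁ × E₂) :
    penalized u φ ε x y ≤ penalized u φ ε' x y := by
  unfold penalized
  gcongr

lemma continuous_penalized (hu : Continuous u) (hφ : Continuous φ) :
    Continuous fun p : (E₁ × E₂) × (E₁ × E₂) => penalized u φ ε p.1 p.2 := by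
  unfold penalized
  fun_prop

lemma penalty_le_of_penalized_le {x y : E₁ × E₂}
    (h : penalized u φ ε x (y.1, x.2) ≤ penalized u φ ε x y) :
    (ε ^ 2)⁻¹ * ‖x.2 - y.2‖ ^ 2 ≤ u (y.1, x.2) - u y := by
  rw [penalized_of_snd_eq] at h
  unfold penalized at h
  linarith

variable (u φ K) in
def penalizedSuperlevel (ε : ℝ) : Set ((E₁ × E₂) × (E₁ × E₂)) :=
  {p | p.1 ∈ K ∧ -φ 0 ≤ penalized u φ ε p.1 p.2}

lemma isCompact_penalizedSuperlevel [ProperSpace E₂] {C : ℝ} (hu : Continuous u)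
    (hC : ∀ x, |u x| ≤ C) (hφ : Continuous φ) (hφ_lim : Tendsto φ (cocompact E₁) atTop)
    (hK : IsCompact K) (hε : 0 < ε) : IsCompact (penalizedSuperlevel u φ K ε) := by
  obtain ⟨z₀, hz₀⟩ := hφ.exists_forall_le hφ_lim
  set a := 2 * C + φ 0
  have hT : IsCompact ({z | φ z ≤ a} ×ˢ closedBall (0 : E₂) √(ε ^ 2 * (a - φ z₀))) :=
    (isCompact_setOf_le_of_tendsto_cocompact hφ hφ_lim a).prod (isCompact_closedBall _ _)
  -- `(x, y) = (x, x - (x - y))` with `x ∈ K` and `x - y` in the compact set of `hT`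
  refine ((hK.prod hT).image (f := fun q => (q.1, q.1 - q.2)) (by fun_prop)).of_isClosed_subset
    ((hK.isClosed.preimage continuous_fst).inter
      (isClosed_le continuous_const (continuous_penalized hu hφ))) ?_
  rintro ⟨x, y⟩ ⟨hx, hxy⟩
  unfold penalized at hxy
  have hpen : 0 ≤ (ε ^ 2)⁻¹ * ‖x.2 - y.2‖ ^ 2 := by positivity
  have hux := (abs_le.mp (hC x)).2
  have huy := (abs_le.mp (hC y)).1
  have hφ_le : φ (x.1 - y.1) ≤ a := by linarith
  have hpen_le : (ε ^ 2)⁻¹ * ‖x.2 - y.2‖ ^ 2 ≤ a - φ z₀ := by linarith [hz₀ (x.1 - y.1)]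
  refine ⟨(x, x - y), ⟨hx, hφ_le, ?_⟩, by simp⟩
  rw [mem_closedBall_zero_iff, ← abs_norm]
  exact Real.abs_le_sqrt ((inv_mul_le_iff₀ (by positivity)).mp hpen_le)

lemma exists_forall_penalized_le [ProperSpace E₂] (hu : Continuous u)
    (hφ : Continuous φ) (hφ_lim : Tendsto φ (cocompact E₁) atTop) (hK : IsCompact K)
    (hper : ContainsPeriodicReps u K) (hε : 0 < ε) :
    ∃ x ∈ K, ∃ y, ∀ x' y', penalized u φ ε x' y' ≤ penalized u φ ε x y := by
  obtain ⟨C, hC⟩ := hper.exists_abs_le hK hu.continuousOn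
  have hreduce : ∀ p : (E₁ × E₂) × (E₁ × E₂), ∃ q ∈ penalizedSuperlevel u φ K ε,
      penalized u φ ε p.1 p.2 ≤ penalized u φ ε q.1 q.2 := by
    rintro ⟨x', y'⟩
    obtain ⟨v, hxv, hv⟩ := hper x'
    by_cases hlev : -φ 0 ≤ penalized u φ ε (x' + v) (y' + v)
    · exact ⟨(x' + v, y' + v), ⟨hxv, hlev⟩, (penalized_add_add hv x' y').ge⟩
    · refine ⟨(x' + v, x' + v), ⟨hxv, by simp⟩, ?_⟩
      rw [← penalized_add_add hv x' y']
      simpa using (not_le.mp hlev).le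
  obtain ⟨⟨x, y⟩, ⟨hx, -⟩, hmax⟩ :=
    (isCompact_penalizedSuperlevel hu hC hφ hφ_lim hK hε).exists_forall_le_of_forall_exists_le
      (continuous_penalized hu hφ).continuousOn hreduce
  exact ⟨x, hx, y, fun x' y' => hmax (x', y')⟩

lemma snd_eq_of_tendsto_maximizers {C : ℝ} (hC : ∀ x, |u x| ≤ C) {e : ℕ → ℝ}
    (he : ∀ n, 0 < e n) (he0 : Tendsto e atTop (𝓝 0)) {x y : ℕ → E₁ × E₂}
    (hmax : ∀ n x' y', penalized u φ (e n) x' y' ≤ penalized u φ (e n) (x n) (y n))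
    {x₀ y₀ : E₁ × E₂} (hx : Tendsto x atTop (𝓝 x₀)) (hy : Tendsto y atTop (𝓝 y₀)) :
    x₀.2 = y₀.2 := by
  have hbound : ∀ n, ‖(x n).2 - (y n).2‖ ^ 2 ≤ e n ^ 2 * (2 * C) := fun n =>
    (inv_mul_le_iff₀ (pow_pos (he n) 2)).mp <|
      (penalty_le_of_penalized_le (hmax n _ _)).trans <| by
        linarith [(abs_le.mp (hC ((y n).1, (x n).2))).2, (abs_le.mp (hC (y n))).1]
  have hzero : Tendsto (fun n => ‖(x n).2 - (y n).2‖ ^ 2) atTop (𝓝 0) :=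
    squeeze_zero (fun n => by positivity) hbound (by simpa using (he0.pow 2).mul_const (2 * C))
  have hlim : Tendsto (fun n => ‖(x n).2 - (y n).2‖ ^ 2) atTop (𝓝 (‖x₀.2 - y₀.2‖ ^ 2)) :=
    ((hx.snd_nhds.sub hy.snd_nhds).norm).pow 2
  simpa [sub_eq_zero] using tendsto_nhds_unique hlim hzero

lemma tendsto_penalty_of_tendsto_maximizers (hu : Continuous u) {e : ℕ → ℝ}
    {x y : ℕ → E₁ × E₂}
    (hmax : ∀ n x' y', penalized u φ (e n) x' y' ≤ penalized u φ (e n) (x n) (y n))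
    {x₀ y₀ : E₁ × E₂} (hx : Tendsto x atTop (𝓝 x₀)) (hy : Tendsto y atTop (𝓝 y₀))
    (hsnd : x₀.2 = y₀.2) :
    Tendsto (fun n => (e n ^ 2)⁻¹ * ‖(x n).2 - (y n).2‖ ^ 2) atTop (𝓝 0) := by
  have hlim : Tendsto (fun n => u ((y n).1, (x n).2) - u (y n)) atTop (𝓝 0) := by
    have := ((hu.tendsto _).comp (hy.fst_nhds.prodMk_nhds hx.snd_nhds)).sub
      ((hu.tendsto _).comp hy)
    rwa [hsnd, sub_self] at this
  exact squeeze_zero (fun n => by positivity)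
    (fun n => penalty_le_of_penalized_le (hmax n _ _)) hlim

lemma tendsto_penalized_of_tendsto_maximizers (hu : Continuous u) (hφ : Continuous φ)
    {e : ℕ → ℝ} {x y : ℕ → E₁ × E₂}
    (hmax : ∀ n x' y', penalized u φ (e n) x' y' ≤ penalized u φ (e n) (x n) (y n))
    {x₀ y₀ : E₁ × E₂} (hx : Tendsto x atTop (𝓝 x₀)) (hy : Tendsto y atTop (𝓝 y₀))
    (hsnd : x₀.2 = y₀.2)
    (hpen : Tendsto (fun n => (e n ^ 2)⁻¹ * ‖(x n).2 - (y n).2‖ ^ 2) atTop (𝓝 0)) :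
    Tendsto (fun n => penalized u φ (e n) (x n) (y n)) atTop
        (𝓝 (sSup (unpenalizedValues u φ))) ∧
      u (x₀.1, x₀.2) - u (y₀.1, x₀.2) - φ (x₀.1 - y₀.1) = sSup (unpenalizedValues u φ) := by
  set L := u (x₀.1, x₀.2) - u (y₀.1, x₀.2) - φ (x₀.1 - y₀.1)
  have hlim : Tendsto (fun n => penalized u φ (e n) (x n) (y n)) atTop (𝓝 L) := by
    have := ((((hu.tendsto _).comp hx).sub ((hu.tendsto _).comp hy)).sub
      ((hφ.tendsto _).comp (hx.fst_nhds.sub hy.fst_nhds))).sub hpen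
    have hy₀ : u (y₀.1, x₀.2) = u y₀ := by rw [hsnd]
    have hL_eq : L = u x₀ - u y₀ - φ (x₀.1 - y₀.1) - 0 := by simp only [L, hy₀, sub_zero]
    exact hL_eq ▸ this
  have hle : ∀ n, ∀ m ∈ unpenalizedValues u φ, m ≤ penalized u φ (e n) (x n) (y n) := by
    rintro n m ⟨x₁, y₁, x₂, rfl⟩
    exact penalized_of_snd_eq (x₁, x₂) y₁ ▸ hmax n (x₁, x₂) (y₁, x₂)
  have hL : L ∈ unpenalizedValues u φ := ⟨_, _, _, rfl⟩
  have hLM : L = sSup (unpenalizedValues u φ) :=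
    le_antisymm (le_csSup ⟨_, hle 0⟩ hL)
      (ge_of_tendsto' hlim fun n => csSup_le ⟨L, hL⟩ (hle n))
  exact ⟨hLM ▸ hlim, hLM⟩

theorem exists_seq_tendsto_of_penalized_maximizers [ProperSpace E₂] (hu : Continuous u)
    (hφ : Continuous φ) (hφ_lim : Tendsto φ (cocompact E₁) atTop) (hK : IsCompact K)
    (hper : ContainsPeriodicReps u K) (P Q : ℝ → E₁ × E₂)
    (hPQ : ∀ ε, 0 < ε →
      P ε ∈ K ∧ ∀ x' y', penalized u φ ε x' y' ≤ penalized u φ ε (P ε) (Q ε)) :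
    ∃ (e : ℕ → ℝ) (x₀ y₀ : E₁ × E₂),
      (∀ n, 0 < e n) ∧ Tendsto e atTop (𝓝 0) ∧ x₀.2 = y₀.2 ∧
      Tendsto (fun n => penalized u φ (e n) (P (e n)) (Q (e n))) atTop
        (𝓝 (sSup (unpenalizedValues u φ))) ∧
      Tendsto (fun n => (e n ^ 2)⁻¹ * ‖(P (e n)).2 - (Q (e n)).2‖ ^ 2) atTop (𝓝 0) ∧
      Tendsto (fun n => (P (e n), Q (e n))) atTop (𝓝 (x₀, y₀)) ∧
      u (x₀.1, x₀.2) - u (y₀.1, x₀.2) - φ (x₀.1 - y₀.1) = sSup (unpenalizedValues u φ) := by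
  obtain ⟨C, hC⟩ := hper.exists_abs_le hK hu.continuousOn
  set f : ℕ → ℝ := fun n => 1 / ((n : ℝ) + 1)
  have hf : ∀ n, 0 < f n := fun n => by positivity
  have hf_le : ∀ n, f n ≤ 1 := fun n =>
    (div_le_one (by positivity)).mpr (le_add_of_nonneg_left n.cast_nonneg)
  have hmem : ∀ n, (P (f n), Q (f n)) ∈ penalizedSuperlevel u φ K 1 := fun n =>
    ⟨(hPQ _ (hf n)).1, by
      simpa using ((hPQ _ (hf n)).2 (P (f n)) (P (f n))).trans
        (penalized_le_penalized_of_le (hf n) (hf_le n) _ _)⟩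
  obtain ⟨⟨x₀, y₀⟩, -, σ, hσ, hlim⟩ :=
    (isCompact_penalizedSuperlevel hu hC hφ hφ_lim hK one_pos).tendsto_subseq hmem
  have he : ∀ n, 0 < f (σ n) := fun n => hf (σ n)
  have he0 : Tendsto (f ∘ σ) atTop (𝓝 0) :=
    tendsto_one_div_add_atTop_nhds_zero_nat.comp hσ.tendsto_atTop
  have hmax n := (hPQ _ (he n)).2
  have hsnd := snd_eq_of_tendsto_maximizers hC he he0 hmax hlim.fst_nhds hlim.snd_nhds
  have hpen := tendsto_penalty_of_tendsto_maximizers hu hmax hlim.fst_nhds hlim.snd_nhds hsnd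
  obtain ⟨hval, hM⟩ := tendsto_penalized_of_tendsto_maximizers hu hφ hmax
    hlim.fst_nhds hlim.snd_nhds hsnd hpen
  exact ⟨f ∘ σ, x₀, y₀, he, he0, hsnd, hval, hpen, hlim, hM⟩

end Penalization

def unitCube (d : ℕ) : Set (EuclideanSpace ℝ (Fin d)) := {z | ∀ i, z i ∈ Icc (0 : ℝ) 1}

lemma isCompact_unitCube (d : ℕ) : IsCompact (unitCube d) := by
  have h : unitCube d = (EuclideanSpace.equiv (Fin d) ℝ).toHomeomorph ⁻¹' Icc 0 1 := by
    ext z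
    simp [unitCube, Pi.le_def, forall_and]
  rw [h, Homeomorph.isCompact_preimage]
  exact isCompact_Icc

lemma exists_int_add_mem_unitCube {d : ℕ} (x : EuclideanSpace ℝ (Fin d)) :
    ∃ k : Fin d → ℤ, x + (WithLp.equiv 2 (Fin d → ℝ)).symm (fun i => (k i : ℝ)) ∈ unitCube d :=
  ⟨fun i => -⌊x i⌋, fun i => by
    simp [← sub_eq_add_neg, Int.self_sub_floor, (Int.fract_lt_one _).le]⟩

/-- **Penalization lemma (Lemma on maximum points).**
Let `u` be continuous and `ℤ^{d₁} × ℤ^{d₂}`-periodic, `φ` continuous and coercive.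
Set `ψ_ε(x,y) = u(x) − u(y) − φ(x₁−y₁) − ε⁻²‖x₂−y₂‖²` and let
`M = sup { u(x₁,x₂) − u(y₁,x₂) − φ(x₁−y₁) }`. Then for each `ε > 0` the function `ψ_ε`
attains its global maximum at a point whose first entry lies in `[0,1]^d`, and for any
choice of such maximizers there is a sequence `ε_n → 0⁺` along which the maximum values
converge to `M`, the penalization term vanishes, and the points converge to a maximum
point `(x̄, ȳ)` of the unpenalized problem with `x̄₂ = ȳ₂`. -/
theorem penalization_maximum_points {d₁ d₂ : ℕ}
    (u : EuclideanSpace ℝ (Fin d₁) × EuclideanSpace ℝ (Fin d₂) → ℝ) (hu : Continuous u)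
    (huper : ∀ (k : Fin d₁ → ℤ) (l : Fin d₂ → ℤ)
        (x₁ : EuclideanSpace ℝ (Fin d₁)) (x₂ : EuclideanSpace ℝ (Fin d₂)),
      u (x₁ + (WithLp.equiv 2 (Fin d₁ → ℝ)).symm (fun i => (k i : ℝ)),
         x₂ + (WithLp.equiv 2 (Fin d₂ → ℝ)).symm (fun i => (l i : ℝ))) = u (x₁, x₂))
    (φ : EuclideanSpace ℝ (Fin d₁) → ℝ) (hφ : Continuous φ)
    (hφcoer : Tendsto φ (Filter.comap (fun z => ‖z‖) atTop) atTop)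
    (M : ℝ)
    (hM : M = sSup {m : ℝ | ∃ (x₁ y₁ : EuclideanSpace ℝ (Fin d₁))
      (x₂ : EuclideanSpace ℝ (Fin d₂)), m = u (x₁, x₂) - u (y₁, x₂) - φ (x₁ - y₁)})
    (ψ : ℝ → (EuclideanSpace ℝ (Fin d₁) × EuclideanSpace ℝ (Fin d₂))
          → (EuclideanSpace ℝ (Fin d₁) × EuclideanSpace ℝ (Fin d₂)) → ℝ)
    (hψ : ∀ ε x y,
      ψ ε x y = u x - u y - φ (x.1 - y.1) - (ε ^ 2)⁻¹ * ‖x.2 - y.2‖ ^ 2) :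
    -- existence of maximizers with first entry in the unit cube
    (∀ ε : ℝ, 0 < ε →
      ∃ x y : EuclideanSpace ℝ (Fin d₁) × EuclideanSpace ℝ (Fin d₂),
        (∀ i, x.1 i ∈ Icc (0:ℝ) 1) ∧ (∀ i, x.2 i ∈ Icc (0:ℝ) 1) ∧
        ∀ x' y', ψ ε x' y' ≤ ψ ε x y) ∧
    -- for any choice of such maximizers, a subsequence converges as described
    (∀ P Q : ℝ → EuclideanSpace ℝ (Fin d₁) × EuclideanSpace ℝ (Fin d₂),
      (∀ ε : ℝ, 0 < ε →
        (∀ i, (P ε).1 i ∈ Icc (0:ℝ) 1) ∧ (∀ i, (P ε).2 i ∈ Icc (0:ℝ) 1) ∧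
        ∀ x' y', ψ ε x' y' ≤ ψ ε (P ε) (Q ε)) →
      ∃ (e : ℕ → ℝ) (xb yb : EuclideanSpace ℝ (Fin d₁) × EuclideanSpace ℝ (Fin d₂)),
        (∀ n, 0 < e n) ∧
        Tendsto e atTop (nhds 0) ∧
        xb.2 = yb.2 ∧
        Tendsto (fun n => ψ (e n) (P (e n)) (Q (e n))) atTop (nhds M) ∧
        Tendsto (fun n => ((e n) ^ 2)⁻¹ * ‖(P (e n)).2 - (Q (e n)).2‖ ^ 2) atTop (nhds 0) ∧
        Tendsto (fun n => (P (e n), Q (e n))) atTop (nhds (xb, yb)) ∧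
        u (xb.1, xb.2) - u (yb.1, xb.2) - φ (xb.1 - yb.1) = M) := by
  have hφ_lim : Tendsto φ (cocompact _) atTop := by
    rwa [comap_norm_atTop, cobounded_eq_cocompact] at hφcoer
  have hK := (isCompact_unitCube d₁).prod (isCompact_unitCube d₂)
  have hper : ContainsPeriodicReps u (unitCube d₁ ×ˢ unitCube d₂) := fun x => by
    obtain ⟨k, hk⟩ := exists_int_add_mem_unitCube x.1
    obtain ⟨l, hl⟩ := exists_int_add_mem_unitCube x.2
    exact ⟨(_, _), ⟨hk, hl⟩, fun z => huper k l z.1 z.2⟩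
  obtain rfl : ψ = penalized u φ := funext₃ hψ
  subst hM
  refine ⟨fun ε hε => ?_, fun P Q hPQ => ?_⟩
  · obtain ⟨x, ⟨hx₁, hx₂⟩, y, hmax⟩ := exists_forall_penalized_le hu hφ hφ_lim hK hper hε
    exact ⟨x, y, hx₁, hx₂, hmax⟩
  · exact exists_seq_tendsto_of_penalized_maximizers hu hφ hφ_lim hK hper P Q
      fun ε hε => ⟨⟨(hPQ ε hε).1, (hPQ ε hε).2.1⟩, (hPQ ε hε).2.2⟩
end

section
/- Let d = d₁ + d₂ and write vectors z ∈ ℝ^d as z = (z₁, z₂) ∈ ℝ^{d₁} × ℝ^{d₂}. Let a = (a₁, a₂) ∈ ℝ^d with a₁ ≠ 0, let L > 0 and α ∈ (0,1), and let Z be the symmetric d×d matrix with quadratic form ⟨Zz, z⟩ = Lα‖a‖^{α−2}(‖z‖² + (α−2)⟨a, z⟩²/‖a‖²) (the Hessian at a of the map x ↦ L‖x‖^α). If X, Y are symmetric d×d matrices satisfying ⟨Xz, z⟩ − ⟨Yz', z'⟩ ≤ ⟨Z(z−z'), z−z'⟩ for all z, z' ∈ ℝ^d, then the top-left d₁×d₁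 blocks X₁, Y₁ of X and Y satisfy trace(X₁ − Y₁) ≤ 4Lα‖a‖^{α−2}(1 + (α−2)‖a₁‖²/‖a‖²). -/
/-!
Put `M = X - Y`. Taking `z = z'` in the hypothesis shows that the quadratic form of `M` is
nonpositive, and taking `z' = -z` gives `⟨Mq, q⟩ ≤ 4⟨Zq, q⟩`. For a unit vector `c` the
projection `P = 1 - c cᵀ` satisfies `trace M = ⟨Mc, c⟩ + trace (Pᵀ M P)`, and the last trace is
a sum of values of the quadratic form of `M`, so `trace M ≤ ⟨Mc, c⟩`. Applied to the first block
of `M` with `c = a₁ / ‖a₁‖`, whose extension by zero `q` has `‖q‖ = 1` and `⟨a, q⟩ = ‖a₁‖`, this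
bounds the trace by `4⟨Zq, q⟩`, which is the right-hand side.
-/

open Matrix RealInnerProductSpace

namespace Matrix

variable {ι R : Type*} [Fintype ι] [CommRing R]

section

variable [PartialOrder R] [IsOrderedRing R]

theorem trace_transpose_mul_mul_nonpos {M : Matrix ι ι R} (hM : ∀ v, M *ᵥ v ⬝ᵥ v ≤ 0)
    {κ : Type*} [Fintype κ] (B : Matrix ι κ R) : (Bᵀ * M * B).trace ≤ 0 := by
  refine Finset.sum_nonpos fun j _ => ?_
  convert hM (Bᵀ j) using 1
  simp only [diag_apply, mul_apply, mulVec, dotProduct, transpose_apply, Finset.sum_mul]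
  rw [Finset.sum_comm]
  exact Finset.sum_congr rfl fun _ _ => Finset.sum_congr rfl fun _ _ => by ring

theorem trace_le_mulVec_dotProduct_of_nonpos {M : Matrix ι ι R} (hM : ∀ v, M *ᵥ v ⬝ᵥ v ≤ 0)
    {c : ι → R} (hc : c ⬝ᵥ c = 1) : M.trace ≤ M *ᵥ c ⬝ᵥ c := by
  classical
  set P : Matrix ι ι R := 1 - vecMulVec c c
  have hPt : Pᵀ = P := by simp [P, transpose_vecMulVec]
  have hPP : P * P = P := by
    simp only [P, sub_mul, mul_sub, one_mul, mul_one, vecMulVec_mul_vecMulVec, hc, one_smul]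
    abel
  have hcompl : (Pᵀ * M * P).trace = M.trace - M *ᵥ c ⬝ᵥ c := by
    rw [hPt, trace_mul_cycle, hPP, trace_mul_comm, mul_sub, mul_one, mul_vecMulVec, trace_sub,
      trace_vecMulVec]
  exact sub_nonpos.mp (hcompl ▸ trace_transpose_mul_mul_nonpos hM P)

end

section

variable [Preorder R] {X Y Z : Matrix ι ι R}

theorem sub_mulVec_dotProduct_self_nonpos
    (h : ∀ z z' : ι → R, X *ᵥ z ⬝ᵥ z - Y *ᵥ z' ⬝ᵥ z' ≤ Z *ᵥ (z - z') ⬝ᵥ (z - z')) (z : ι → R) :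
    (X - Y) *ᵥ z ⬝ᵥ z ≤ 0 := by
  simpa [sub_mulVec] using h z z

theorem sub_mulVec_dotProduct_self_le_four_mul
    (h : ∀ z z' : ι → R, X *ᵥ z ⬝ᵥ z - Y *ᵥ z' ⬝ᵥ z' ≤ Z *ᵥ (z - z') ⬝ᵥ (z - z')) (z : ι → R) :
    (X - Y) *ᵥ z ⬝ᵥ z ≤ 4 * (Z *ᵥ z ⬝ᵥ z) := by
  convert h z (-z) using 1
  · simp [sub_mulVec, mulVec_neg]
  · simp only [sub_neg_eq_add, mulVec_add, add_dotProduct, dotProduct_add]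
    ring

end

theorem toBlocks₁₁_mulVec_dotProduct {m n R : Type*} [Fintype m] [Fintype n] [Semiring R]
    (M : Matrix (m ⊕ n) (m ⊕ n) R) (v : m → R) :
    M.toBlocks₁₁ *ᵥ v ⬝ᵥ v = M *ᵥ Sum.elim v 0 ⬝ᵥ Sum.elim v 0 := by
  simp [mulVec, dotProduct, toBlocks₁₁, Fintype.sum_sum_type]

end Matrix

theorem EuclideanSpace.inner_toLp_sumElim_zero {ι κ 𝕜 : Type*} [Fintype ι] [Fintype κ] [RCLike 𝕜]
    {a : EuclideanSpace 𝕜 (ι ⊕ κ)} {a₁ : EuclideanSpace 𝕜 ι} (ha : ∀ i, a (Sum.inl i) = a₁ i)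
    (v : EuclideanSpace 𝕜 ι) :
    inner 𝕜 a (WithLp.toLp 2 (Sum.elim v 0)) = inner 𝕜 a₁ v := by
  simp [PiLp.inner_apply, Fintype.sum_sum_type, ha]

theorem trace_estimate_first_block_toy_model_general {d₁ d₂ : ℕ}
    (L α : ℝ)
    (a : EuclideanSpace ℝ (Fin d₁ ⊕ Fin d₂))
    (a₁ : EuclideanSpace ℝ (Fin d₁))
    (ha₁ : ∀ i, a (Sum.inl i) = a₁ i)
    (ha₁ne : a₁ ≠ 0)
    (X Y Z : Matrix (Fin d₁ ⊕ Fin d₂) (Fin d₁ ⊕ Fin d₂) ℝ)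
    (hZquad : ∀ z : EuclideanSpace ℝ (Fin d₁ ⊕ Fin d₂),
      Z.mulVec z ⬝ᵥ z
        = L * α * ‖a‖ ^ (α - 2) * (‖z‖ ^ 2 + (α - 2) * ⟪a, z⟫ ^ 2 / ‖a‖ ^ 2))
    (h : ∀ z z' : EuclideanSpace ℝ (Fin d₁ ⊕ Fin d₂),
      X.mulVec z ⬝ᵥ z - Y.mulVec z' ⬝ᵥ z' ≤ Z.mulVec (z - z') ⬝ᵥ (z - z')) :
    (X.toBlocks₁₁ - Y.toBlocks₁₁).trace
      ≤ 4 * L * α * ‖a‖ ^ (α - 2) * (1 + (α - 2) * ‖a₁‖ ^ 2 / ‖a‖ ^ 2) := by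
  have h' : ∀ z z' : Fin d₁ ⊕ Fin d₂ → ℝ,
      X *ᵥ z ⬝ᵥ z - Y *ᵥ z' ⬝ᵥ z' ≤ Z *ᵥ (z - z') ⬝ᵥ (z - z') :=
    fun z z' => h (WithLp.toLp 2 z) (WithLp.toLp 2 z')
  set u : EuclideanSpace ℝ (Fin d₁) := ‖a₁‖⁻¹ • a₁
  set q : EuclideanSpace ℝ (Fin d₁ ⊕ Fin d₂) := WithLp.toLp 2 (Sum.elim u 0)
  have hu_norm : ‖u‖ = 1 := norm_smul_inv_norm ha₁ne
  have hu : ⟪u, u⟫ = 1 := by rw [real_inner_self_eq_norm_sq, hu_norm, one_pow]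
  have hq : ‖q‖ ^ 2 = 1 := by
    rw [← real_inner_self_eq_norm_sq,
      EuclideanSpace.inner_toLp_sumElim_zero (a := q) (a₁ := u) (fun _ => rfl), hu]
  have haq : ⟪a, q⟫ = ‖a₁‖ := by
    rw [EuclideanSpace.inner_toLp_sumElim_zero ha₁, real_inner_smul_right,
      real_inner_self_eq_norm_sq]
    field_simp [norm_ne_zero_iff.mpr ha₁ne]
  calc (X - Y).toBlocks₁₁.trace
      ≤ (X - Y).toBlocks₁₁ *ᵥ u ⬝ᵥ u := by
        refine trace_le_mulVec_dotProduct_of_nonpos (fun v => ?_) hu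
        rw [toBlocks₁₁_mulVec_dotProduct]
        exact sub_mulVec_dotProduct_self_nonpos h' _
    _ = (X - Y) *ᵥ q ⬝ᵥ q := toBlocks₁₁_mulVec_dotProduct _ _
    _ ≤ 4 * (Z *ᵥ q ⬝ᵥ q) := sub_mulVec_dotProduct_self_le_four_mul h' _
    _ = _ := by rw [hZquad, hq, haq]; ring

/-- **Trace estimate on the first diagonal block for the toy mixed model.**
With `d = d₁ + d₂`, `a = (a₁, a₂)`, `a₁ ≠ 0`, and `Z` the Hessian at `a` of `x ↦ L‖x‖^α`
(i.e. `⟨Zz, z⟩ = Lα‖a‖^{α−2}(‖z‖² + (α−2)⟨a,z⟩²/‖a‖²)`), if symmetric matrices `X, Y`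
satisfy `⟨Xz, z⟩ − ⟨Yz', z'⟩ ≤ ⟨Z(z−z'), z−z'⟩` for all `z, z'`, then the top-left blocks
satisfy `trace(X₁ − Y₁) ≤ 4Lα‖a‖^{α−2}(1 + (α−2)‖a₁‖²/‖a‖²)`. -/
theorem trace_estimate_first_block_toy_model {d₁ d₂ : ℕ}
    (L α : ℝ) (hL : 0 < L) (hα : α ∈ Set.Ioo (0:ℝ) 1)
    (a : EuclideanSpace ℝ (Fin d₁ ⊕ Fin d₂))
    (a₁ : EuclideanSpace ℝ (Fin d₁)) (a₂ : EuclideanSpace ℝ (Fin d₂))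
    (ha₁ : ∀ i, a (Sum.inl i) = a₁ i) (ha₂ : ∀ i, a (Sum.inr i) = a₂ i)
    (ha₁ne : a₁ ≠ 0)
    (X Y Z : Matrix (Fin d₁ ⊕ Fin d₂) (Fin d₁ ⊕ Fin d₂) ℝ)
    (hX : X.IsSymm) (hY : Y.IsSymm) (hZ : Z.IsSymm)
    (hZquad : ∀ z : EuclideanSpace ℝ (Fin d₁ ⊕ Fin d₂),
      Z.mulVec z ⬝ᵥ z
        = L * α * ‖a‖ ^ (α - 2) * (‖z‖ ^ 2 + (α - 2) * ⟪a, z⟫ ^ 2 / ‖a‖ ^ 2))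
    (h : ∀ z z' : EuclideanSpace ℝ (Fin d₁ ⊕ Fin d₂),
      X.mulVec z ⬝ᵥ z - Y.mulVec z' ⬝ᵥ z' ≤ Z.mulVec (z - z') ⬝ᵥ (z - z')) :
    (X.toBlocks₁₁ - Y.toBlocks₁₁).trace
      ≤ 4 * L * α * ‖a‖ ^ (α - 2) * (1 + (α - 2) * ‖a₁‖ ^ 2 / ‖a‖ ^ 2) :=
  trace_estimate_first_block_toy_model_general L α a a₁ ha₁ ha₁ne X Y Z hZquad h
end

section
/- Assume the maximum setup: u, v : ℝ^d → ℝ are bounded Borel measurable, φ : [0,∞) → ℝ is C² with φ' ≥ 0 and φ'' ≤ 0, and ψ(x,y) := u(x) − v(y) − φ(‖x−y‖) attains a global maximum at (x̄, ȳ) with x̄ ≠ ȳ; set a := x̄ − ȳ, â := a/‖a‖ and p := φ'(‖a‖)·â. Let δ₀, η ∈ (0,1) satisfy 1 − η − δ₀ > 0, set δ := ‖a‖δ₀ and η̃ := (1−η−δ₀)/(1+δ₀). Let μ₁, μ₂ be nonnegative Borel measures on ℝ^d, and assume all integrands appearing below are integrable with respect to the indicated measures on C_{η,δ}(a). Then ∫_{C_{η,δ}(a)}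 (u(x̄+z) − u(x̄) − ⟨p, z⟩) dμ₁(z) − ∫_{C_{η,δ}(a)} (v(ȳ+z) − v(ȳ) − ⟨p, z⟩) dμ₂(z) ≤ (1/2) ∫_{C_{η,δ}(a)} sup_{s∈[−1,1]} ( (1−η̃²)·φ'(‖a+sz‖)/‖a+sz‖ + η̃²·φ''(‖a+sz‖) ) ‖z‖² d(μ₁+μ₂)(z). -/
/-!
Write `a_t = a + t • z` and `f t = φ ‖a_t‖`. Then `f'' t = φ''(r) c² + φ'(r) (‖z‖² - c²) / r`
with `r = ‖a_t‖` and `c = ⟪a_t, z⟫ / r`. For `z` in the cone and `|t| ≤ 1`, the vector `a_t`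
stays within `‖a‖ δ₀` of `a`, so `|c| ≥ η̃ ‖z‖`; as `φ'' ≤ 0 ≤ φ'/r`, this bounds `f''` by the
integrand of the right-hand side, and Taylor's formula gives
`φ ‖a + z‖ - φ ‖a‖ - ⟪p, z⟫ ≤ g z / 2`. Maximality of `ψ` at `(x̄, ȳ)` turns this into an upper
bound for `u (x̄ + z) - u x̄ - ⟪p, z⟫` and, applied to `-z` (the cone and `g` are symmetric), into
a lower bound for `v (ȳ + z) - v ȳ - ⟪p, z⟫`. Integrating the two bounds gives the estimate.
-/

open MeasureTheory RealInnerProductSpace Set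

theorem sub_le_mul_sub_of_hasDerivAt_le {f f' : ℝ → ℝ} {x y C : ℝ} (hxy : x ≤ y)
    (hf : ∀ s ∈ Icc x y, HasDerivAt f (f' s) s) (hC : ∀ s ∈ Icc x y, f' s ≤ C) :
    f y - f x ≤ C * (y - x) :=
  (convex_Icc x y).image_sub_le_mul_sub_of_deriv_le
    (fun s hs => (hf s hs).continuousAt.continuousWithinAt)
    (fun s hs => (hf s (interior_subset hs)).differentiableAt.differentiableWithinAt)
    (fun s hs => (hf s (interior_subset hs)).deriv ▸ hC s (interior_subset hs))
    x (left_mem_Icc.2 hxy) y (right_mem_Icc.2 hxy) hxy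

theorem sub_sub_mul_le_half_mul_sq_of_hasDerivAt_le {f f' f'' : ℝ → ℝ} {x y K : ℝ} (hxy : x ≤ y)
    (hf : ∀ s ∈ Icc x y, HasDerivAt f (f' s) s) (hf' : ∀ s ∈ Icc x y, HasDerivAt f' (f'' s) s)
    (hK : ∀ s ∈ Icc x y, f'' s ≤ K) :
    f y - f x - f' x * (y - x) ≤ K / 2 * (y - x) ^ 2 := by
  have hslope : ∀ s ∈ Icc x y, f' s - f' x - K * (s - x) ≤ 0 := fun s hs => by
    have := sub_le_mul_sub_of_hasDerivAt_le hs.1 (fun t ht => hf' t ⟨ht.1, ht.2.trans hs.2⟩)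
      (fun t ht => hK t ⟨ht.1, ht.2.trans hs.2⟩)
    linarith
  have hrem : ∀ s ∈ Icc x y, HasDerivAt (fun t => f t - f' x * t - K / 2 * (t - x) ^ 2)
      (f' s - f' x - K * (s - x)) s := fun s hs => by
    refine (((hf s hs).sub ((hasDerivAt_id s).const_mul (f' x))).sub
      ((((hasDerivAt_id s).sub_const x).pow 2).const_mul (K / 2))).congr_deriv ?_
    simp only [id, Nat.cast_ofNat]
    ring
  have := sub_le_mul_sub_of_hasDerivAt_le hxy hrem hslope
  linarith

theorem le_iSup_Icc_of_continuousOn {G : ℝ → ℝ} {x y s : ℝ} (hG : ContinuousOn G (Icc x y))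
    (hs : s ∈ Icc x y) : G s ≤ ⨆ t : Icc x y, G t :=
  have hbdd : BddAbove (range fun t : Icc x y => G t) := by
    simpa only [← image_eq_range] using isCompact_Icc.bddAbove_image hG
  le_ciSup hbdd ⟨s, hs⟩

noncomputable section

variable {E : Type*} [NormedAddCommGroup E] [InnerProductSpace ℝ E]

theorem norm_smul_le_of_abs_le_one {s : ℝ} (w : E) (hs : |s| ≤ 1) : ‖s • w‖ ≤ ‖w‖ := by
  rw [norm_smul, Real.norm_eq_abs]
  exact mul_le_of_le_one_left (norm_nonneg w) hs

theorem hasDerivAt_add_smul (a w : E) (s : ℝ) : HasDerivAt (fun t : ℝ => a + t • w) w s := by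
  simpa using ((hasDerivAt_id s).smul_const w).const_add a

theorem hasDerivAt_norm_add_smul {a w : E} {s : ℝ} (h : a + s • w ≠ 0) :
    HasDerivAt (fun t : ℝ => ‖a + t • w‖) (⟪a + s • w, w⟫ / ‖a + s • w‖) s := by
  have hsq := (hasDerivAt_add_smul a w s).norm_sq.sqrt (by positivity)
  simp only [Real.sqrt_sq (norm_nonneg _)] at hsq
  convert hsq using 1
  ring

theorem hasDerivAt_inner_div_norm_add_smul {a w : E} {s : ℝ} (h : a + s • w ≠ 0) :
    HasDerivAt (fun t : ℝ => ⟪a + t • w, w⟫ / ‖a + t • w‖)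
      ((‖w‖ ^ 2 - (⟪a + s • w, w⟫ / ‖a + s • w‖) ^ 2) / ‖a + s • w‖) s := by
  have hinner := (hasDerivAt_add_smul a w s).inner ℝ (hasDerivAt_const s w)
  have hn : ‖a + s • w‖ ≠ 0 := norm_ne_zero_iff.2 h
  refine (hinner.div (hasDerivAt_norm_add_smul h) hn).congr_deriv ?_
  rw [inner_zero_right, zero_add, real_inner_self_eq_norm_sq]
  field_simp

/-- The second derivative of `t ↦ φ ‖x + t • w‖` at `t = 0`. -/
def radialHessian (φ : ℝ → ℝ) (x w : E) : ℝ :=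
  deriv (deriv φ) ‖x‖ * (⟪x, w⟫ / ‖x‖) ^ 2 + deriv φ ‖x‖ * ((‖w‖ ^ 2 - (⟪x, w⟫ / ‖x‖) ^ 2) / ‖x‖)

theorem hasDerivAt_comp_norm_add_smul {f : ℝ → ℝ} {a w : E} {s : ℝ}
    (hf : DifferentiableAt ℝ f ‖a + s • w‖) (h : a + s • w ≠ 0) :
    HasDerivAt (fun t : ℝ => f ‖a + t • w‖)
      (deriv f ‖a + s • w‖ * (⟪a + s • w, w⟫ / ‖a + s • w‖)) s :=
  hf.hasDerivAt.comp s (hasDerivAt_norm_add_smul h)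

theorem hasDerivAt_deriv_comp_norm_add_smul {φ : ℝ → ℝ} {a w : E} {s : ℝ}
    (hφ : DifferentiableAt ℝ (deriv φ) ‖a + s • w‖) (h : a + s • w ≠ 0) :
    HasDerivAt (fun t : ℝ => deriv φ ‖a + t • w‖ * (⟪a + t • w, w⟫ / ‖a + t • w‖))
      (radialHessian φ (a + s • w) w) s :=
  ((hasDerivAt_comp_norm_add_smul hφ h).mul (hasDerivAt_inner_div_norm_add_smul h)).congr_deriv
    (by rw [radialHessian]; ring)

def radialHessianBound (φ : ℝ → ℝ) (e : ℝ) (x : E) : ℝ :=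
  (1 - e ^ 2) * deriv φ ‖x‖ / ‖x‖ + e ^ 2 * deriv (deriv φ) ‖x‖

theorem radialHessian_le_radialHessianBound {φ : ℝ → ℝ} {e : ℝ} {x w : E} (hx : x ≠ 0)
    (hφ' : 0 ≤ deriv φ ‖x‖) (hφ'' : deriv (deriv φ) ‖x‖ ≤ 0) (he : 0 ≤ e)
    (hxw : e * ‖x‖ * ‖w‖ ≤ |⟪x, w⟫|) :
    radialHessian φ x w ≤ radialHessianBound φ e x * ‖w‖ ^ 2 := by
  have hx' : 0 < ‖x‖ := norm_pos_iff.2 hx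
  set c := ⟪x, w⟫ / ‖x‖ with hc_def
  have hc : e ^ 2 * ‖w‖ ^ 2 ≤ c ^ 2 := by
    rw [← mul_pow, ← sq_abs c, abs_div, abs_norm]
    gcongr
    rwa [le_div_iff₀ hx', mul_right_comm]
  have hB : 0 ≤ deriv φ ‖x‖ / ‖x‖ := div_nonneg hφ' hx'.le
  have hexcess : radialHessian φ x w - radialHessianBound φ e x * ‖w‖ ^ 2
      = (deriv (deriv φ) ‖x‖ - deriv φ ‖x‖ / ‖x‖) * (c ^ 2 - e ^ 2 * ‖w‖ ^ 2) := by
    simp only [radialHessian, radialHessianBound, ← hc_def]; ring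
  linarith [mul_nonpos_of_nonpos_of_nonneg (sub_nonpos.2 (hφ''.trans hB)) (sub_nonneg.2 hc)]

theorem iSup_radialHessianBound_add_smul_neg (φ : ℝ → ℝ) (e : ℝ) (a z : E) :
    ⨆ s : Icc (-1 : ℝ) 1, radialHessianBound φ e (a + (s : ℝ) • -z) =
      ⨆ s : Icc (-1 : ℝ) 1, radialHessianBound φ e (a + (s : ℝ) • z) := by
  let n : Icc (-1 : ℝ) 1 → Icc (-1 : ℝ) 1 := fun s => ⟨-s, neg_le_neg s.2.2, by linarith [s.2.1]⟩
  have hn : Function.Involutive n := fun s => Subtype.ext (neg_neg (s : ℝ))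
  simp only [smul_neg, ← neg_smul]
  exact hn.surjective.iSup_comp fun s => radialHessianBound φ e (a + (s : ℝ) • z)

def axialCone (a : E) (η δ : ℝ) : Set E :=
  {z | ‖z‖ ≤ δ ∧ (1 - η) * ‖z‖ * ‖a‖ ≤ |⟪a, z⟫|}

theorem neg_mem_axialCone {a z : E} {η δ : ℝ} (hz : z ∈ axialCone a η δ) :
    -z ∈ axialCone a η δ := by
  simpa only [axialCone, mem_ofPred_eq, norm_neg, inner_neg_right, abs_neg] using hz

theorem isClosed_axialCone (a : E) (η δ : ℝ) : IsClosed (axialCone a η δ) :=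
  (isClosed_le continuous_norm continuous_const).inter
    (isClosed_le (by fun_prop : Continuous fun z : E => (1 - η) * ‖z‖ * ‖a‖)
      (by fun_prop : Continuous fun z : E => |⟪a, z⟫|))

theorem mul_one_sub_le_norm_add_smul_of_mem_axialCone {a w : E} {η δ₀ s : ℝ}
    (hw : w ∈ axialCone a η (‖a‖ * δ₀)) (hs : |s| ≤ 1) : ‖a‖ * (1 - δ₀) ≤ ‖a + s • w‖ := by
  have := norm_sub_norm_le a (-(s • w))
  rw [norm_neg, sub_neg_eq_add] at this
  linarith [hw.1, norm_smul_le_of_abs_le_one w hs]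

theorem mul_norm_mul_norm_le_abs_inner_of_mem_axialCone {a w : E} {η δ₀ s : ℝ} (hδ₀ : 0 ≤ δ₀)
    (hηδ₀ : 0 ≤ 1 - η - δ₀) (hw : w ∈ axialCone a η (‖a‖ * δ₀)) (hs : |s| ≤ 1) :
    (1 - η - δ₀) / (1 + δ₀) * ‖a + s • w‖ * ‖w‖ ≤ |⟪a + s • w, w⟫| := by
  obtain ⟨hw₁, hw₂⟩ := hw
  have hsw : ‖s • w‖ ≤ ‖w‖ := norm_smul_le_of_abs_le_one w hs
  have hsw₂ : |s| * ‖w‖ ^ 2 ≤ ‖a‖ * δ₀ * ‖w‖ := by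
    rw [sq, ← mul_assoc, ← Real.norm_eq_abs, ← norm_smul]
    exact mul_le_mul_of_nonneg_right (hsw.trans hw₁) (norm_nonneg w)
  have hinner : |⟪a, w⟫| ≤ |⟪a + s • w, w⟫| + |s| * ‖w‖ ^ 2 := by
    have : ⟪a, w⟫ = ⟪a + s • w, w⟫ - s * ‖w‖ ^ 2 := by
      rw [inner_add_left, real_inner_smul_left, real_inner_self_eq_norm_sq]; ring
    rw [this]
    exact (abs_sub _ _).trans_eq (by rw [abs_mul, abs_of_nonneg (sq_nonneg ‖w‖)])
  have hnorm : ‖a + s • w‖ ≤ (1 + δ₀) * ‖a‖ := by linarith [norm_add_le a (s • w)]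
  have hpos : 0 < 1 + δ₀ := by linarith
  calc (1 - η - δ₀) / (1 + δ₀) * ‖a + s • w‖ * ‖w‖
      ≤ (1 - η - δ₀) / (1 + δ₀) * ((1 + δ₀) * ‖a‖) * ‖w‖ := by gcongr
    _ = (1 - η) * ‖w‖ * ‖a‖ - ‖a‖ * δ₀ * ‖w‖ := by field_simp
    _ ≤ |⟪a + s • w, w⟫| := by linarith

theorem comp_norm_add_sub_le_of_mem_axialCone {φ : ℝ → ℝ} (hφ : ContDiff ℝ 2 φ)
    (hφ' : ∀ t : ℝ, 0 ≤ t → 0 ≤ deriv φ t) (hφ'' : ∀ t : ℝ, 0 ≤ t → deriv (deriv φ) t ≤ 0)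
    {a w : E} {δ₀ η : ℝ} (ha : a ≠ 0) (hδ₀ : δ₀ ∈ Ioo 0 1) (hηδ₀ : 0 ≤ 1 - η - δ₀)
    (hw : w ∈ axialCone a η (‖a‖ * δ₀)) :
    φ ‖a + w‖ - φ ‖a‖ - deriv φ ‖a‖ * (⟪a, w⟫ / ‖a‖) ≤
      1 / 2 * ((⨆ s : Icc (-1 : ℝ) 1,
        radialHessianBound φ ((1 - η - δ₀) / (1 + δ₀)) (a + (s : ℝ) • w)) * ‖w‖ ^ 2) := by
  set e := (1 - η - δ₀) / (1 + δ₀)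
  obtain ⟨hφd, -, hφ1⟩ := contDiff_succ_iff_deriv.1 (show ContDiff ℝ (1 + 1) φ from hφ)
  have hne : ∀ s ∈ Icc (-1 : ℝ) 1, a + s • w ≠ 0 := fun s hs => by
    have := mul_one_sub_le_norm_add_smul_of_mem_axialCone hw (abs_le.2 hs)
    rw [← norm_pos_iff]
    nlinarith [norm_pos_iff.2 ha, hδ₀.2]
  have hcont : ContinuousOn (fun s : ℝ => radialHessianBound φ e (a + s • w)) (Icc (-1) 1) := by
    have hline : Continuous fun s : ℝ => ‖a + s • w‖ := by fun_prop
    exact ((continuousOn_const.mul ((hφ.continuous_deriv one_le_two).comp hline).continuousOn).div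
      hline.continuousOn fun s hs => norm_ne_zero_iff.2 (hne s hs)).add
      (continuousOn_const.mul (hφ1.continuous_deriv_one.comp hline).continuousOn)
  have hbound : ∀ s ∈ Icc (-1 : ℝ) 1, radialHessian φ (a + s • w) w ≤
      (⨆ t : Icc (-1 : ℝ) 1, radialHessianBound φ e (a + (t : ℝ) • w)) * ‖w‖ ^ 2 :=
    fun s hs => (radialHessian_le_radialHessianBound (hne s hs) (hφ' _ (norm_nonneg _))
      (hφ'' _ (norm_nonneg _)) (div_nonneg hηδ₀ (by linarith [hδ₀.1]))
      (mul_norm_mul_norm_le_abs_inner_of_mem_axialCone hδ₀.1.le hηδ₀ hw (abs_le.2 hs))).trans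
      (mul_le_mul_of_nonneg_right (le_iSup_Icc_of_continuousOn hcont hs) (sq_nonneg _))
  have hsub : Icc (0 : ℝ) 1 ⊆ Icc (-1) 1 := Icc_subset_Icc (by norm_num) le_rfl
  have htaylor := sub_sub_mul_le_half_mul_sq_of_hasDerivAt_le zero_le_one
    (fun s hs => hasDerivAt_comp_norm_add_smul (hφd _) (hne s (hsub hs)))
    (fun s hs => hasDerivAt_deriv_comp_norm_add_smul (hφ1.differentiable one_ne_zero _)
      (hne s (hsub hs)))
    (fun s hs => hbound s (hsub hs))
  simp only [one_smul, zero_smul, add_zero, sub_zero, mul_one, one_pow] at htaylor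
  linarith

end

theorem setIntegral_sub_setIntegral_le {X : Type*} [MeasurableSpace X] {μ₁ μ₂ : Measure X}
    {s : Set X} {f₁ f₂ g : X → ℝ} (hs : MeasurableSet s) (hf₁ : IntegrableOn f₁ s μ₁)
    (hf₂ : IntegrableOn f₂ s μ₂) (hg : IntegrableOn g s (μ₁ + μ₂))
    (h₁ : ∀ x ∈ s, f₁ x ≤ g x) (h₂ : ∀ x ∈ s, -g x ≤ f₂ x) :
    ∫ x in s, f₁ x ∂μ₁ - ∫ x in s, f₂ x ∂μ₂ ≤ ∫ x in s, g x ∂(μ₁ + μ₂) := by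
  obtain ⟨hg₁, hg₂⟩ := integrableOn_add_measure.1 hg
  rw [Measure.restrict_add, integral_add_measure hg₁ hg₂]
  have := setIntegral_mono_on hf₁ hg₁ hs h₁
  have := setIntegral_mono_on (f := fun x => -g x) hg₂.neg hf₂ hs h₂
  rw [integral_neg] at this
  linarith

theorem cone_estimate_general_nonlocal_general {d : ℕ}
    (u v : EuclideanSpace ℝ (Fin d) → ℝ)
    (φ : ℝ → ℝ) (hφ : ContDiff ℝ 2 φ)
    (hφ' : ∀ t : ℝ, 0 ≤ t → 0 ≤ deriv φ t)
    (hφ'' : ∀ t : ℝ, 0 ≤ t → deriv (deriv φ) t ≤ 0)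
    (xb yb : EuclideanSpace ℝ (Fin d)) (hxy : xb ≠ yb)
    (hmax : ∀ x y, u x - v y - φ ‖x - y‖ ≤ u xb - v yb - φ ‖xb - yb‖)
    (δ₀ η : ℝ) (hδ₀ : δ₀ ∈ Ioo (0:ℝ) 1)
    (hηδ₀ : 0 < 1 - η - δ₀)
    (a : EuclideanSpace ℝ (Fin d)) (ha : a = xb - yb)
    (p : EuclideanSpace ℝ (Fin d)) (hp : p = deriv φ ‖a‖ • (‖a‖⁻¹ • a))
    (δ eta_t : ℝ) (hδ : δ = ‖a‖ * δ₀) (heta_t : eta_t = (1 - η - δ₀) / (1 + δ₀))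
    (Cone : Set (EuclideanSpace ℝ (Fin d)))
    (hCone : Cone = {z | ‖z‖ ≤ δ ∧ (1 - η) * ‖z‖ * ‖a‖ ≤ abs ⟪a, z⟫})
    (μ₁ μ₂ : Measure (EuclideanSpace ℝ (Fin d)))
    (g : EuclideanSpace ℝ (Fin d) → ℝ)
    (hg : ∀ z, g z = (⨆ s : Icc (-1:ℝ) 1,
        ((1 - eta_t ^ 2) * deriv φ ‖a + (s : ℝ) • z‖ / ‖a + (s : ℝ) • z‖
          + eta_t ^ 2 * deriv (deriv φ) ‖a + (s : ℝ) • z‖)) * ‖z‖ ^ 2)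
    (hint1 : IntegrableOn (fun z => u (xb + z) - u xb - ⟪p, z⟫) Cone μ₁)
    (hint2 : IntegrableOn (fun z => v (yb + z) - v yb - ⟪p, z⟫) Cone μ₂)
    (hint3 : IntegrableOn g Cone (μ₁ + μ₂)) :
    (∫ z in Cone, (u (xb + z) - u xb - ⟪p, z⟫) ∂μ₁)
      - ∫ z in Cone, (v (yb + z) - v yb - ⟪p, z⟫) ∂μ₂
    ≤ (1 / 2) * ∫ z in Cone, g z ∂(μ₁ + μ₂) := by
  have ha₀ : a ≠ 0 := ha ▸ sub_ne_zero.2 hxy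
  have hCone' : Cone = axialCone a η (‖a‖ * δ₀) := hδ ▸ hCone
  have hg' : ∀ z, g z = (⨆ s : Icc (-1 : ℝ) 1,
      radialHessianBound φ ((1 - η - δ₀) / (1 + δ₀)) (a + (s : ℝ) • z)) * ‖z‖ ^ 2 :=
    heta_t ▸ hg
  have hp' : ∀ z, ⟪p, z⟫ = deriv φ ‖a‖ * (⟪a, z⟫ / ‖a‖) := fun z => by
    rw [hp, real_inner_smul_left, real_inner_smul_left, inv_mul_eq_div]
  have hu : ∀ z ∈ Cone, u (xb + z) - u xb - ⟪p, z⟫ ≤ 1 / 2 * g z := fun z hz => by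
    have := hmax (xb + z) yb
    rw [add_sub_right_comm, ← ha] at this
    rw [hp', hg']
    linarith [comp_norm_add_sub_le_of_mem_axialCone hφ hφ' hφ'' ha₀ hδ₀ hηδ₀.le (hCone' ▸ hz)]
  have hv : ∀ z ∈ Cone, -(1 / 2 * g z) ≤ v (yb + z) - v yb - ⟪p, z⟫ := fun z hz => by
    have := hmax xb (yb + z)
    rw [← sub_sub, ← ha, sub_eq_add_neg a] at this
    have hneg := comp_norm_add_sub_le_of_mem_axialCone hφ hφ' hφ'' ha₀ hδ₀ hηδ₀.le
      (neg_mem_axialCone (hCone' ▸ hz))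
    rw [iSup_radialHessianBound_add_smul_neg, norm_neg, inner_neg_right, neg_div, mul_neg] at hneg
    rw [hp', hg']
    linarith
  rw [← integral_const_mul]
  exact setIntegral_sub_setIntegral_le (hCone' ▸ (isClosed_axialCone a η _).measurableSet)
    hint1 hint2 (hint3.const_mul _) hu hv

/-- **Concave estimate on the cone for general nonlocal operators (Lemma est_NL2).**
In the maximum setup (`ψ(x,y) = u(x) − v(y) − φ(‖x−y‖)` maximal at `(x̄,ȳ)`, `x̄ ≠ ȳ`),
with `a = x̄ − ȳ`, `p = φ'(‖a‖)â`, `δ = ‖a‖δ₀` and `η̃ = (1−η−δ₀)/(1+δ₀)`, the difference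
of the nonlocal terms over the cone `C_{η,δ}(a)` is bounded by
`(1/2)∫_{C_{η,δ}(a)} sup_{|s|≤1} ((1−η̃²)φ'(‖a+sz‖)/‖a+sz‖ + η̃²φ''(‖a+sz‖)) ‖z‖² d(μ₁+μ₂)`. -/
theorem cone_estimate_general_nonlocal {d : ℕ}
    (u v : EuclideanSpace ℝ (Fin d) → ℝ)
    (hum : Measurable u) (hvm : Measurable v)
    (hub : ∃ C, ∀ x, |u x| ≤ C) (hvb : ∃ C, ∀ x, |v x| ≤ C)
    (φ : ℝ → ℝ) (hφ : ContDiff ℝ 2 φ)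
    (hφ' : ∀ t : ℝ, 0 ≤ t → 0 ≤ deriv φ t)
    (hφ'' : ∀ t : ℝ, 0 ≤ t → deriv (deriv φ) t ≤ 0)
    (xb yb : EuclideanSpace ℝ (Fin d)) (hxy : xb ≠ yb)
    (hmax : ∀ x y, u x - v y - φ ‖x - y‖ ≤ u xb - v yb - φ ‖xb - yb‖)
    (δ₀ η : ℝ) (hδ₀ : δ₀ ∈ Ioo (0:ℝ) 1) (hη : η ∈ Ioo (0:ℝ) 1)
    (hηδ₀ : 0 < 1 - η - δ₀)
    (a : EuclideanSpace ℝ (Fin d)) (ha : a = xb - yb)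
    (p : EuclideanSpace ℝ (Fin d)) (hp : p = deriv φ ‖a‖ • (‖a‖⁻¹ • a))
    (δ eta_t : ℝ) (hδ : δ = ‖a‖ * δ₀) (heta_t : eta_t = (1 - η - δ₀) / (1 + δ₀))
    (Cone : Set (EuclideanSpace ℝ (Fin d)))
    (hCone : Cone = {z | ‖z‖ ≤ δ ∧ (1 - η) * ‖z‖ * ‖a‖ ≤ abs ⟪a, z⟫})
    (μ₁ μ₂ : Measure (EuclideanSpace ℝ (Fin d)))
    (g : EuclideanSpace ℝ (Fin d) → ℝ)
    (hg : ∀ z, g z = (⨆ s : Icc (-1:ℝ) 1,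
        ((1 - eta_t ^ 2) * deriv φ ‖a + (s : ℝ) • z‖ / ‖a + (s : ℝ) • z‖
          + eta_t ^ 2 * deriv (deriv φ) ‖a + (s : ℝ) • z‖)) * ‖z‖ ^ 2)
    (hint1 : IntegrableOn (fun z => u (xb + z) - u xb - ⟪p, z⟫) Cone μ₁)
    (hint2 : IntegrableOn (fun z => v (yb + z) - v yb - ⟪p, z⟫) Cone μ₂)
    (hint3 : IntegrableOn g Cone (μ₁ + μ₂)) :
    (∫ z in Cone, (u (xb + z) - u xb - ⟪p, z⟫) ∂μ₁)
      - ∫ z in Cone, (v (yb + z) - v yb - ⟪p, z⟫) ∂μ₂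
    ≤ (1 / 2) * ∫ z in Cone, g z ∂(μ₁ + μ₂) :=
  cone_estimate_general_nonlocal_general u v φ hφ hφ' hφ'' xb yb hxy hmax δ₀ η hδ₀ hηδ₀ a ha p hp δ
    eta_t hδ heta_t Cone hCone μ₁ μ₂ g hg hint1 hint2 hint3
end

section
/- Assume the maximum setup: u, v : ℝ^d → ℝ are bounded Borel measurable, φ : [0,∞) → ℝ is C² with φ' ≥ 0 and φ'' ≤ 0, and ψ(x,y) := u(x) − v(y) − φ(‖x−y‖) attains a global maximum at (x̄, ȳ) with x̄ ≠ ȳ; set a := x̄ − ȳ, â := a/‖a‖ and p := φ'(‖a‖)·â. Let δ₀, η ∈ (0,1) satisfy 1 − η − δ₀ > 0, set δ := ‖a‖δ₀ and assume δ ≤ 1. Let μ₁, μ₂, μ*, μ⁺, μ⁻ be nonnegative Borel measures on ℝ^d with μ₁ = μ* + μ⁺ and μ₂ = μ* + μ⁻ (so μ⁺ + μ⁻ plays the role of the total variation |μ₁ − μ₂|), and assume all integrands appearing below are integrable with respect to the indicated measures. Then ∫_{B \ C_{η,δ}(a)} (u(x̄+z) − u(x̄) − ⟨p, z⟩) dμ₁(z)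 − ∫_{B \ C_{η,δ}(a)} (v(ȳ+z) − v(ȳ) − ⟨p, z⟩) dμ₂(z) ≤ 2φ'(‖a‖) ∫_{B \ B_δ} ‖z‖ d(μ⁺+μ⁻)(z) + ∫_{B_δ \ C_{η,δ}(a)} sup_{s∈[−1,1]} ( φ'(‖a+sz‖)/‖a+sz‖ ) ‖z‖² d(μ⁺+μ⁻)(z). -/
open MeasureTheory RealInnerProductSpace Set

/-!
Translating both points of the maximum `(xb, yb)` by the same `z` shows that the increment of `u`
at `xb` is at most that of `v` at `yb`, which disposes of the common part `μs`. Moving only one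
point and using the tangent line of the concave `φ` at `‖a‖` bounds each increment, corrected by
`⟪p, z⟫`, by `φ'(‖a‖)` times the second-order remainder `‖a ± z‖ - ‖a‖ ∓ ⟪a / ‖a‖, z⟫` of the
norm. That remainder is at most `2‖z‖`, and at most `‖z‖² / ‖a ± z‖` when `‖z‖ < ‖a‖`; in the
latter case `φ'(‖a‖) / ‖a ± z‖` is dominated by the supremum in `g` because `φ'` is antitone.
-/

lemma ConcaveOn.le_add_deriv_mul_sub {S : Set ℝ} {f : ℝ → ℝ} (hf : ConcaveOn ℝ S f) {x y : ℝ}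
    (hx : x ∈ S) (hy : y ∈ S) (hfx : DifferentiableAt ℝ f x) :
    f y ≤ f x + deriv f x * (y - x) := by
  rcases lt_trichotomy x y with hxy | rfl | hyx
  · have := hf.slope_le_deriv hx hy hxy hfx
    rw [slope_def_field, div_le_iff₀ (sub_pos.2 hxy)] at this
    linarith
  · simp
  · have := hf.deriv_le_slope hy hx hyx hfx
    rw [slope_def_field, le_div_iff₀ (sub_pos.2 hyx)] at this
    linarith

lemma concaveOn_of_contDiff_two {D : Set ℝ} (hD : Convex ℝ D) {f : ℝ → ℝ} (hf : ContDiff ℝ 2 f)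
    (hf'' : ∀ x ∈ D, deriv (deriv f) x ≤ 0) : ConcaveOn ℝ D f := by
  have hf' : ContDiff ℝ 1 (deriv f) := hf.iterate_deriv' 1 1
  exact concaveOn_of_deriv2_nonpos hD hf.continuous.continuousOn
    (hf.differentiable two_ne_zero).differentiableOn
    (hf'.differentiable one_ne_zero).differentiableOn
    fun x hx => hf'' x (interior_subset hx)

section NormRemainder

variable {E : Type*} [NormedAddCommGroup E] [InnerProductSpace ℝ E]

lemma abs_inner_inv_norm_smul_le (a w : E) : |⟪‖a‖⁻¹ • a, w⟫| ≤ ‖w‖ := by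
  refine (abs_real_inner_le_norm _ _).trans (mul_le_of_le_one_left (norm_nonneg w) ?_)
  rw [norm_smul, norm_inv, norm_norm]
  exact inv_mul_le_one_of_le₀ le_rfl (norm_nonneg a)

lemma norm_mul_inner_inv_norm_smul (a w : E) : ‖a‖ * ⟪‖a‖⁻¹ • a, w⟫ = ⟪a, w⟫ := by
  rcases eq_or_ne a 0 with rfl | ha
  · simp
  · rw [real_inner_smul_left, ← mul_assoc, mul_inv_cancel₀ (norm_ne_zero_iff.2 ha), one_mul]

lemma norm_add_sub_norm_sub_inner_le_two_mul (a w : E) :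
    ‖a + w‖ - ‖a‖ - ⟪‖a‖⁻¹ • a, w⟫ ≤ 2 * ‖w‖ := by
  linarith [norm_add_le a w, neg_abs_le ⟪‖a‖⁻¹ • a, w⟫, abs_inner_inv_norm_smul_le a w]

lemma norm_add_sub_norm_sub_inner_le_sq_div {a w : E} (hw : ‖w‖ ≤ ‖a‖) :
    ‖a + w‖ - ‖a‖ - ⟪‖a‖⁻¹ • a, w⟫ ≤ ‖w‖ ^ 2 / ‖a + w‖ := by
  set c := ⟪‖a‖⁻¹ • a, w⟫
  have hc := abs_le.1 (abs_inner_inv_norm_smul_le a w)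
  have hsq : ‖a + w‖ ^ 2 = ‖a‖ ^ 2 + 2 * (‖a‖ * c) + ‖w‖ ^ 2 := by
    rw [norm_add_sq_real, norm_mul_inner_inv_norm_smul]
  have hq : 0 ≤ ‖a‖ + c := by linarith
  rcases (norm_nonneg (a + w)).eq_or_lt with hN | hN
  · rw [← hN, div_zero]
    linarith
  · have hqN : ‖a‖ + c ≤ ‖a + w‖ := by
      nlinarith [sq_nonneg c, sq_abs c, abs_le.2 hc]
    rw [le_div_iff₀ hN]
    nlinarith [mul_nonneg hq (sub_nonneg.2 hqN), sq_nonneg c]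

lemma norm_smul_le_of_mem_Icc {s : ℝ} (hs : s ∈ Icc (-1 : ℝ) 1) (z : E) : ‖s • z‖ ≤ ‖z‖ := by
  rw [norm_smul]
  exact mul_le_of_le_one_left (norm_nonneg z) (abs_le.2 hs)

lemma sub_norm_le_norm_add_smul {a z : E} {s : ℝ} (hs : s ∈ Icc (-1 : ℝ) 1) :
    ‖a‖ - ‖z‖ ≤ ‖a + s • z‖ := by
  linarith [norm_sub_le_norm_add a (s • z), norm_smul_le_of_mem_Icc hs z]

lemma bddAbove_range_div_norm_add_smul {f : ℝ → ℝ} (hf : AntitoneOn f (Ici 0))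
    (hf₀ : ∀ t, 0 ≤ t → 0 ≤ f t) {a z : E} (hz : ‖z‖ < ‖a‖) :
    BddAbove (range fun s : Icc (-1 : ℝ) 1 => f ‖a + (s : ℝ) • z‖ / ‖a + (s : ℝ) • z‖) := by
  refine ⟨f 0 / (‖a‖ - ‖z‖), ?_⟩
  rintro _ ⟨s, rfl⟩
  exact div_le_div₀ (hf₀ 0 le_rfl) (hf self_mem_Ici (norm_nonneg _) (norm_nonneg _))
    (sub_pos.2 hz) (sub_norm_le_norm_add_smul s.2)

lemma div_norm_add_smul_le_iSup {f : ℝ → ℝ} (hf : AntitoneOn f (Ici 0))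
    (hf₀ : ∀ t, 0 ≤ t → 0 ≤ f t) {a z : E} (hz : ‖z‖ < ‖a‖) {s₀ : ℝ} (hs₀ : s₀ ∈ Icc (-1 : ℝ) 1) :
    f ‖a‖ / ‖a + s₀ • z‖ ≤ ⨆ s : Icc (-1 : ℝ) 1, f ‖a + (s : ℝ) • z‖ / ‖a + (s : ℝ) • z‖ := by
  have hbdd := bddAbove_range_div_norm_add_smul hf hf₀ hz
  rcases le_total ‖a‖ ‖a + s₀ • z‖ with hle | hle
  · calc f ‖a‖ / ‖a + s₀ • z‖ ≤ f ‖a‖ / ‖a‖ :=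
          div_le_div_of_nonneg_left (hf₀ _ (norm_nonneg a)) ((norm_nonneg z).trans_lt hz) hle
      _ ≤ _ := by simpa using le_ciSup hbdd ⟨0, by norm_num⟩
  · calc f ‖a‖ / ‖a + s₀ • z‖ ≤ f ‖a + s₀ • z‖ / ‖a + s₀ • z‖ := by
          gcongr
          exact hf (norm_nonneg _) (norm_nonneg _) hle
      _ ≤ _ := le_ciSup hbdd ⟨s₀, hs₀⟩

lemma mul_norm_add_smul_sub_norm_sub_inner_le_iSup {f : ℝ → ℝ} (hf : AntitoneOn f (Ici 0))
    (hf₀ : ∀ t, 0 ≤ t → 0 ≤ f t) {a z : E} (hz : ‖z‖ < ‖a‖) {s₀ : ℝ}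
    (hs₀ : s₀ ∈ Icc (-1 : ℝ) 1) :
    f ‖a‖ * (‖a + s₀ • z‖ - ‖a‖ - ⟪‖a‖⁻¹ • a, s₀ • z⟫) ≤
      (⨆ s : Icc (-1 : ℝ) 1, f ‖a + (s : ℝ) • z‖ / ‖a + (s : ℝ) • z‖) * ‖z‖ ^ 2 := by
  have hsz := norm_smul_le_of_mem_Icc hs₀ z
  calc f ‖a‖ * (‖a + s₀ • z‖ - ‖a‖ - ⟪‖a‖⁻¹ • a, s₀ • z⟫)
      ≤ f ‖a‖ * (‖z‖ ^ 2 / ‖a + s₀ • z‖) := by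
        gcongr
        · exact hf₀ _ (norm_nonneg a)
        · exact (norm_add_sub_norm_sub_inner_le_sq_div (hsz.trans hz.le)).trans (by gcongr)
    _ = f ‖a‖ / ‖a + s₀ • z‖ * ‖z‖ ^ 2 := by ring
    _ ≤ _ := by
        gcongr
        exact div_norm_add_smul_le_iSup hf hf₀ hz hs₀

end NormRemainder

section DoublingMaximum

variable {E : Type*} [NormedAddCommGroup E] {u v : E → ℝ} {φ : ℝ → ℝ} {xb yb : E}

lemma increment_le_increment_of_max
    (hmax : ∀ x y, u x - v y - φ ‖x - y‖ ≤ u xb - v yb - φ ‖xb - yb‖) (z : E) :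
    u (xb + z) - u xb ≤ v (yb + z) - v yb := by
  have h := hmax (xb + z) (yb + z)
  rw [add_sub_add_right_eq_sub] at h
  linarith

variable [InnerProductSpace ℝ E]

lemma increment_sub_inner_le_of_max_left
    (hmax : ∀ x y, u x - v y - φ ‖x - y‖ ≤ u xb - v yb - φ ‖xb - yb‖) {c : ℝ}
    (htan : ∀ t, 0 ≤ t → φ t ≤ φ ‖xb - yb‖ + c * (t - ‖xb - yb‖)) (z : E) :
    u (xb + z) - u xb - ⟪c • (‖xb - yb‖⁻¹ • (xb - yb)), z⟫ ≤
      c * (‖xb - yb + z‖ - ‖xb - yb‖ - ⟪‖xb - yb‖⁻¹ • (xb - yb), z⟫) := by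
  have h := hmax (xb + z) yb
  rw [show xb + z - yb = xb - yb + z by abel] at h
  have := htan _ (norm_nonneg (xb - yb + z))
  rw [real_inner_smul_left]
  linarith

lemma neg_increment_sub_inner_le_of_max_right
    (hmax : ∀ x y, u x - v y - φ ‖x - y‖ ≤ u xb - v yb - φ ‖xb - yb‖) {c : ℝ}
    (htan : ∀ t, 0 ≤ t → φ t ≤ φ ‖xb - yb‖ + c * (t - ‖xb - yb‖)) (z : E) :
    -(v (yb + z) - v yb - ⟪c • (‖xb - yb‖⁻¹ • (xb - yb)), z⟫) ≤
      c * (‖xb - yb + -z‖ - ‖xb - yb‖ - ⟪‖xb - yb‖⁻¹ • (xb - yb), -z⟫) := by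
  have h := hmax xb (yb + z)
  rw [show xb - (yb + z) = xb - yb + -z by abel] at h
  have := htan _ (norm_nonneg (xb - yb + -z))
  rw [real_inner_smul_left, inner_neg_right]
  linarith

lemma increments_sub_inner_le_two_mul_norm_of_max
    (hmax : ∀ x y, u x - v y - φ ‖x - y‖ ≤ u xb - v yb - φ ‖xb - yb‖) {c : ℝ} (hc : 0 ≤ c)
    (htan : ∀ t, 0 ≤ t → φ t ≤ φ ‖xb - yb‖ + c * (t - ‖xb - yb‖)) (z : E) :
    u (xb + z) - u xb - ⟪c • (‖xb - yb‖⁻¹ • (xb - yb)), z⟫ ≤ 2 * c * ‖z‖ ∧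
      -(v (yb + z) - v yb - ⟪c • (‖xb - yb‖⁻¹ • (xb - yb)), z⟫) ≤ 2 * c * ‖z‖ := by
  have hR := norm_add_sub_norm_sub_inner_le_two_mul (xb - yb)
  exact ⟨(increment_sub_inner_le_of_max_left hmax htan z).trans (by nlinarith [hR z]),
    (neg_increment_sub_inner_le_of_max_right hmax htan z).trans
      (by nlinarith [hR (-z), norm_neg z])⟩

lemma increments_sub_inner_le_iSup_of_max
    (hmax : ∀ x y, u x - v y - φ ‖x - y‖ ≤ u xb - v yb - φ ‖xb - yb‖) {f : ℝ → ℝ}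
    (hf : AntitoneOn f (Ici 0)) (hf₀ : ∀ t, 0 ≤ t → 0 ≤ f t)
    (htan : ∀ t, 0 ≤ t → φ t ≤ φ ‖xb - yb‖ + f ‖xb - yb‖ * (t - ‖xb - yb‖)) {z : E}
    (hz : ‖z‖ < ‖xb - yb‖) :
    u (xb + z) - u xb - ⟪f ‖xb - yb‖ • (‖xb - yb‖⁻¹ • (xb - yb)), z⟫ ≤
        (⨆ s : Icc (-1 : ℝ) 1, f ‖xb - yb + (s : ℝ) • z‖ / ‖xb - yb + (s : ℝ) • z‖) * ‖z‖ ^ 2 ∧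
      -(v (yb + z) - v yb - ⟪f ‖xb - yb‖ • (‖xb - yb‖⁻¹ • (xb - yb)), z⟫) ≤
        (⨆ s : Icc (-1 : ℝ) 1, f ‖xb - yb + (s : ℝ) • z‖ / ‖xb - yb + (s : ℝ) • z‖) * ‖z‖ ^ 2 := by
  have hR (s₀ : ℝ) (hs₀ : s₀ ∈ Icc (-1 : ℝ) 1) :=
    mul_norm_add_smul_sub_norm_sub_inner_le_iSup hf hf₀ hz hs₀
  refine ⟨(increment_sub_inner_le_of_max_left hmax htan z).trans ?_,
    (neg_increment_sub_inner_le_of_max_right hmax htan z).trans ?_⟩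
  · simpa using hR 1 (by norm_num)
  · simpa using hR (-1) (by norm_num)

end DoublingMaximum

section SetIntegral

variable {α : Type*} [MeasurableSpace α] {μs μp μm : Measure α} {f₁ f₂ : α → ℝ}

lemma setIntegral_sub_setIntegral_le_s9 {S : Set α} {G : α → ℝ} (hS : MeasurableSet S)
    (hf₁ : IntegrableOn f₁ S (μs + μp)) (hf₂ : IntegrableOn f₂ S (μs + μm))
    (hG : IntegrableOn G S (μp + μm)) (h₁₂ : ∀ z ∈ S, f₁ z ≤ f₂ z)
    (h₁ : ∀ z ∈ S, f₁ z ≤ G z) (h₂ : ∀ z ∈ S, -f₂ z ≤ G z) :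
    ∫ z in S, f₁ z ∂(μs + μp) - ∫ z in S, f₂ z ∂(μs + μm) ≤ ∫ z in S, G z ∂(μp + μm) := by
  rw [IntegrableOn, Measure.restrict_add, integrable_add_measure] at hf₁ hf₂ hG
  rw [Measure.restrict_add, Measure.restrict_add, Measure.restrict_add,
    integral_add_measure hf₁.1 hf₁.2, integral_add_measure hf₂.1 hf₂.2,
    integral_add_measure hG.1 hG.2]
  have hs : ∫ z in S, f₁ z ∂μs ≤ ∫ z in S, f₂ z ∂μs := setIntegral_mono_on hf₁.1 hf₂.1 hS h₁₂
  have hp : ∫ z in S, f₁ z ∂μp ≤ ∫ z in S, G z ∂μp := setIntegral_mono_on hf₁.2 hG.1 hS h₁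
  have hm : ∫ z in S, -f₂ z ∂μm ≤ ∫ z in S, G z ∂μm := setIntegral_mono_on hf₂.2.neg hG.2 hS h₂
  rw [integral_neg] at hm
  linarith

lemma setIntegral_union_sub_setIntegral_union_le {S₁ S₂ : Set α} {F₁ F₂ : α → ℝ}
    (hS₁ : MeasurableSet S₁) (hS₂ : MeasurableSet S₂) (hdisj : Disjoint S₁ S₂)
    (hf₁ : IntegrableOn f₁ (S₁ ∪ S₂) (μs + μp)) (hf₂ : IntegrableOn f₂ (S₁ ∪ S₂) (μs + μm))
    (hF₁ : IntegrableOn F₁ S₁ (μp + μm)) (hF₂ : IntegrableOn F₂ S₂ (μp + μm))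
    (h₁₂ : ∀ z ∈ S₁ ∪ S₂, f₁ z ≤ f₂ z)
    (h₁ : ∀ z ∈ S₁, f₁ z ≤ F₁ z ∧ -f₂ z ≤ F₁ z) (h₂ : ∀ z ∈ S₂, f₁ z ≤ F₂ z ∧ -f₂ z ≤ F₂ z) :
    ∫ z in S₁ ∪ S₂, f₁ z ∂(μs + μp) - ∫ z in S₁ ∪ S₂, f₂ z ∂(μs + μm) ≤
      ∫ z in S₁, F₁ z ∂(μp + μm) + ∫ z in S₂, F₂ z ∂(μp + μm) := by
  classical
  have hG₁ : EqOn (S₁.piecewise F₁ F₂) F₁ S₁ := piecewise_eqOn _ _ _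
  have hG₂ : EqOn (S₁.piecewise F₁ F₂) F₂ S₂ :=
    (piecewise_eqOn_compl _ _ _).mono hdisj.subset_compl_left
  have hGi₁ := hF₁.congr_fun hG₁.symm hS₁
  have hGi₂ := hF₂.congr_fun hG₂.symm hS₂
  rw [← setIntegral_congr_fun hS₁ hG₁, ← setIntegral_congr_fun hS₂ hG₂,
    ← setIntegral_union hdisj hS₂ hGi₁ hGi₂]
  refine setIntegral_sub_setIntegral_le_s9 (hS₁.union hS₂) hf₁ hf₂ (hGi₁.union hGi₂) h₁₂ ?_ ?_ <;>
    rintro z (hz | hz)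
  exacts [hG₁ hz ▸ (h₁ z hz).1, hG₂ hz ▸ (h₂ z hz).1, hG₁ hz ▸ (h₁ z hz).2, hG₂ hz ▸ (h₂ z hz).2]

end SetIntegral

theorem outside_cone_estimate_general_nonlocal_general {d : ℕ}
    (u v : EuclideanSpace ℝ (Fin d) → ℝ)
    (φ : ℝ → ℝ) (hφ : ContDiff ℝ 2 φ)
    (hφ' : ∀ t : ℝ, 0 ≤ t → 0 ≤ deriv φ t)
    (hφ'' : ∀ t : ℝ, 0 ≤ t → deriv (deriv φ) t ≤ 0)
    (xb yb : EuclideanSpace ℝ (Fin d)) (hxy : xb ≠ yb)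
    (hmax : ∀ x y, u x - v y - φ ‖x - y‖ ≤ u xb - v yb - φ ‖xb - yb‖)
    (δ₀ η : ℝ) (hδ₀ : δ₀ ∈ Ioo (0:ℝ) 1)
    (a : EuclideanSpace ℝ (Fin d)) (ha : a = xb - yb)
    (p : EuclideanSpace ℝ (Fin d)) (hp : p = deriv φ ‖a‖ • (‖a‖⁻¹ • a))
    (δ : ℝ) (hδ : δ = ‖a‖ * δ₀) (hδ1 : δ ≤ 1)
    (Cone : Set (EuclideanSpace ℝ (Fin d)))
    (hCone : Cone = {z | ‖z‖ ≤ δ ∧ (1 - η) * ‖z‖ * ‖a‖ ≤ abs ⟪a, z⟫})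
    (μ₁ μ₂ μs μp μm : Measure (EuclideanSpace ℝ (Fin d)))
    (hμ₁ : μ₁ = μs + μp) (hμ₂ : μ₂ = μs + μm)
    (g : EuclideanSpace ℝ (Fin d) → ℝ)
    (hg : ∀ z, g z = (⨆ s : Icc (-1:ℝ) 1,
        deriv φ ‖a + (s : ℝ) • z‖ / ‖a + (s : ℝ) • z‖) * ‖z‖ ^ 2)
    (hint1 : IntegrableOn (fun z => u (xb + z) - u xb - ⟪p, z⟫)
      (Metric.closedBall 0 1 \ Cone) μ₁)
    (hint2 : IntegrableOn (fun z => v (yb + z) - v yb - ⟪p, z⟫)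
      (Metric.closedBall 0 1 \ Cone) μ₂)
    (hint3 : IntegrableOn (fun z => ‖z‖)
      (Metric.closedBall 0 1 \ Metric.closedBall 0 δ) (μp + μm))
    (hint4 : IntegrableOn g (Metric.closedBall 0 δ \ Cone) (μp + μm)) :
    (∫ z in Metric.closedBall 0 1 \ Cone, (u (xb + z) - u xb - ⟪p, z⟫) ∂μ₁)
      - ∫ z in Metric.closedBall 0 1 \ Cone, (v (yb + z) - v yb - ⟪p, z⟫) ∂μ₂
    ≤ 2 * deriv φ ‖a‖
          * ∫ z in Metric.closedBall 0 1 \ Metric.closedBall 0 δ, ‖z‖ ∂(μp + μm)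
      + ∫ z in Metric.closedBall 0 δ \ Cone, g z ∂(μp + μm) := by
  subst ha hp
  have hna : 0 < ‖xb - yb‖ := norm_pos_iff.2 (sub_ne_zero.2 hxy)
  have hδa : δ < ‖xb - yb‖ := by rw [hδ]; exact mul_lt_of_lt_one_right hna hδ₀.2
  have hconc : ConcaveOn ℝ (Ici 0) φ := concaveOn_of_contDiff_two (convex_Ici 0) hφ hφ''
  have hdiff : Differentiable ℝ φ := hφ.differentiable two_ne_zero
  have htan : ∀ t, 0 ≤ t → φ t ≤ φ ‖xb - yb‖ + deriv φ ‖xb - yb‖ * (t - ‖xb - yb‖) :=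
    fun t ht => hconc.le_add_deriv_mul_sub hna.le ht (hdiff _)
  have hCone_sub : Cone ⊆ Metric.closedBall 0 δ := fun z hz => by
    rw [hCone] at hz
    simpa using hz.1
  have hCone_meas : MeasurableSet Cone := by
    rw [hCone, ofPred_and]
    exact (measurableSet_le (by fun_prop) (by fun_prop)).inter
      (measurableSet_le (by fun_prop) (by fun_prop))
  rw [← sdiff_union_sdiff_cancel (Metric.closedBall_subset_closedBall hδ1) hCone_sub]
    at hint1 hint2 ⊢
  rw [hμ₁, hμ₂, ← integral_const_mul]
  refine setIntegral_union_sub_setIntegral_union_le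
    (measurableSet_closedBall.diff measurableSet_closedBall)
    (measurableSet_closedBall.diff hCone_meas) (disjoint_sdiff_left.mono_right sdiff_subset)
    (hμ₁ ▸ hint1) (hμ₂ ▸ hint2) (hint3.const_mul _) hint4
    (fun z _ => by linarith [increment_le_increment_of_max hmax z])
    (fun z _ => increments_sub_inner_le_two_mul_norm_of_max hmax (hφ' _ hna.le) htan z)
    (fun z hz => hg z ▸ increments_sub_inner_le_iSup_of_max hmax
      (hconc.antitoneOn_deriv fun t _ => hdiff t) hφ' htan
      ((mem_closedBall_zero_iff.1 hz.1).trans_lt hδa))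

/-- **Estimate outside the cone for general nonlocal operators (Lemma est_NL3).**
In the maximum setup, with `μ₁ = μ* + μ⁺` and `μ₂ = μ* + μ⁻` (Jordan-type decomposition),
the difference of the nonlocal terms over `B \ C_{η,δ}(a)` is bounded by
`2φ'(‖a‖)∫_{B \ B_δ} ‖z‖ d(μ⁺+μ⁻) + ∫_{B_δ \ C_{η,δ}(a)} sup_{|s|≤1} (φ'(‖a+sz‖)/‖a+sz‖) ‖z‖² d(μ⁺+μ⁻)`. -/
theorem outside_cone_estimate_general_nonlocal {d : ℕ}
    (u v : EuclideanSpace ℝ (Fin d) → ℝ)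
    (hum : Measurable u) (hvm : Measurable v)
    (hub : ∃ C, ∀ x, |u x| ≤ C) (hvb : ∃ C, ∀ x, |v x| ≤ C)
    (φ : ℝ → ℝ) (hφ : ContDiff ℝ 2 φ)
    (hφ' : ∀ t : ℝ, 0 ≤ t → 0 ≤ deriv φ t)
    (hφ'' : ∀ t : ℝ, 0 ≤ t → deriv (deriv φ) t ≤ 0)
    (xb yb : EuclideanSpace ℝ (Fin d)) (hxy : xb ≠ yb)
    (hmax : ∀ x y, u x - v y - φ ‖x - y‖ ≤ u xb - v yb - φ ‖xb - yb‖)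
    (δ₀ η : ℝ) (hδ₀ : δ₀ ∈ Ioo (0:ℝ) 1) (hη : η ∈ Ioo (0:ℝ) 1)
    (hηδ₀ : 0 < 1 - η - δ₀)
    (a : EuclideanSpace ℝ (Fin d)) (ha : a = xb - yb)
    (p : EuclideanSpace ℝ (Fin d)) (hp : p = deriv φ ‖a‖ • (‖a‖⁻¹ • a))
    (δ : ℝ) (hδ : δ = ‖a‖ * δ₀) (hδ1 : δ ≤ 1)
    (Cone : Set (EuclideanSpace ℝ (Fin d)))
    (hCone : Cone = {z | ‖z‖ ≤ δ ∧ (1 - η) * ‖z‖ * ‖a‖ ≤ abs ⟪a, z⟫})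
    (μ₁ μ₂ μs μp μm : Measure (EuclideanSpace ℝ (Fin d)))
    (hμ₁ : μ₁ = μs + μp) (hμ₂ : μ₂ = μs + μm)
    (g : EuclideanSpace ℝ (Fin d) → ℝ)
    (hg : ∀ z, g z = (⨆ s : Icc (-1:ℝ) 1,
        deriv φ ‖a + (s : ℝ) • z‖ / ‖a + (s : ℝ) • z‖) * ‖z‖ ^ 2)
    (hint1 : IntegrableOn (fun z => u (xb + z) - u xb - ⟪p, z⟫)
      (Metric.closedBall 0 1 \ Cone) μ₁)
    (hint2 : IntegrableOn (fun z => v (yb + z) - v yb - ⟪p, z⟫)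
      (Metric.closedBall 0 1 \ Cone) μ₂)
    (hint3 : IntegrableOn (fun z => ‖z‖)
      (Metric.closedBall 0 1 \ Metric.closedBall 0 δ) (μp + μm))
    (hint4 : IntegrableOn g (Metric.closedBall 0 δ \ Cone) (μp + μm)) :
    (∫ z in Metric.closedBall 0 1 \ Cone, (u (xb + z) - u xb - ⟪p, z⟫) ∂μ₁)
      - ∫ z in Metric.closedBall 0 1 \ Cone, (v (yb + z) - v yb - ⟪p, z⟫) ∂μ₂
    ≤ 2 * deriv φ ‖a‖
          * ∫ z in Metric.closedBall 0 1 \ Metric.closedBall 0 δ, ‖z‖ ∂(μp + μm)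
      + ∫ z in Metric.closedBall 0 δ \ Cone, g z ∂(μp + μm) :=
  outside_cone_estimate_general_nonlocal_general u v φ hφ hφ' hφ'' xb yb hxy hmax δ₀ η hδ₀ a ha p hp
    δ hδ hδ1 Cone hCone μ₁ μ₂ μs μp μm hμ₁ hμ₂ g hg hint1 hint2 hint3 hint4
end

section
/- Let j : ℝ^d × ℝ^d → ℝ^d and let c₀, C₀ > 0 and γ ∈ (0,1] satisfy c₀‖z‖ ≤ ‖j(x,z)‖ ≤ C₀‖z‖ for all x, z ∈ ℝ^d and ‖j(x,z) − j(y,z)‖ ≤ C₀‖z‖·‖x−y‖^γ for all x, y, z ∈ ℝ^d. Let x̄ ≠ ȳ in ℝ^d, set a := x̄ − ȳ, â := a/‖a‖ and m := (x̄+ȳ)/2, let δ > 0 and η ∈ (0,1), and assume (‖a‖/2)^γ ≤ (c₀/C₀) · η/(4−η). Then the set 𝒞 := { z ∈ ℝ^d : ‖j(m,z)‖ ≤ δ/2 and |⟨j(m,z), â⟩| ≥ (1−η/2)‖j(m,z)‖ } is contained both in { z : ‖j(x̄,z)‖ ≤ δ and |⟨j(x̄,z), â⟩| ≥ (1−η)‖j(x̄,z)‖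 } and in { z : ‖j(ȳ,z)‖ ≤ δ and |⟨j(ȳ,z), â⟩| ≥ (1−η)‖j(ȳ,z)‖ }. -/
open RealInnerProductSpace Set

set_option maxHeartbeats 800000 in
/-- **The middle cone is contained in the cones at `x̄` and `ȳ` (Lévy–Itô operators).**
If `j` satisfies `c₀‖z‖ ≤ ‖j(x,z)‖ ≤ C₀‖z‖` and `‖j(x,z) − j(y,z)‖ ≤ C₀‖z‖‖x−y‖^γ`, and
`(‖a‖/2)^γ ≤ (c₀/C₀)·η/(4−η)`, then
`𝒞 = {z : ‖j(m,z)‖ ≤ δ/2, |⟨j(m,z),â⟩| ≥ (1−η/2)‖j(m,z)‖}` (with `m = (x̄+ȳ)/2`) is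
contained in the corresponding cones of aperture `η` and size `δ` at `x̄` and at `ȳ`. -/
theorem middle_cone_inclusion {d : ℕ}
    (j : EuclideanSpace ℝ (Fin d) → EuclideanSpace ℝ (Fin d) → EuclideanSpace ℝ (Fin d))
    (c₀ C₀ γ : ℝ) (hc₀ : 0 < c₀) (hC₀ : 0 < C₀) (hγ : γ ∈ Ioc (0:ℝ) 1)
    (hlow : ∀ x z, c₀ * ‖z‖ ≤ ‖j x z‖)
    (hup : ∀ x z, ‖j x z‖ ≤ C₀ * ‖z‖)
    (hlip : ∀ x y z, ‖j x z - j y z‖ ≤ C₀ * ‖z‖ * ‖x - y‖ ^ γ)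
    (xb yb : EuclideanSpace ℝ (Fin d)) (hxy : xb ≠ yb)
    (a : EuclideanSpace ℝ (Fin d)) (ha : a = xb - yb)
    (a_hat : EuclideanSpace ℝ (Fin d)) (ha_hat : a_hat = ‖a‖⁻¹ • a)
    (m : EuclideanSpace ℝ (Fin d)) (hm : m = (2:ℝ)⁻¹ • (xb + yb))
    (δ η : ℝ) (hδ : 0 < δ) (hη : η ∈ Ioo (0:ℝ) 1)
    (hsmall : (‖a‖ / 2) ^ γ ≤ (c₀ / C₀) * (η / (4 - η))) :
    {z : EuclideanSpace ℝ (Fin d) |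
        ‖j m z‖ ≤ δ / 2 ∧ (1 - η / 2) * ‖j m z‖ ≤ abs ⟪j m z, a_hat⟫}
      ⊆ {z | ‖j xb z‖ ≤ δ ∧ (1 - η) * ‖j xb z‖ ≤ abs ⟪j xb z, a_hat⟫}
        ∩ {z | ‖j yb z‖ ≤ δ ∧ (1 - η) * ‖j yb z‖ ≤ abs ⟪j yb z, a_hat⟫} := by

  obtain ⟨hγ0, hγ1⟩ := hγ
  obtain ⟨hη0, hη1⟩ := hη
  have hane : a ≠ 0 := by rw [ha]; exact sub_ne_zero.mpr hxy
  have hhat : ‖a_hat‖ = 1 := by rw [ha_hat]; exact norm_smul_inv_norm hane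
  set ε : ℝ := η / (4 - η) with hε
  have h4η : 0 < 4 - η := by linarith
  have hε0 : 0 ≤ ε := by positivity
  have hεeq : ε * (4 - η) = η := by rw [hε]; field_simp
  have hε1 : ε ≤ 1 := by nlinarith
  -- key step for any point x at distance ‖a‖/2 from m
  have key : ∀ (x : EuclideanSpace ℝ (Fin d)), ‖x - m‖ = ‖a‖ / 2 →
      ∀ z, ‖j m z‖ ≤ δ / 2 → (1 - η / 2) * ‖j m z‖ ≤ |⟪j m z, a_hat⟫| →
      ‖j x z‖ ≤ δ ∧ (1 - η) * ‖j x z‖ ≤ |⟪j x z, a_hat⟫| := by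
    intro x hx z h1 h2
    have hw0 : (0:ℝ) ≤ ‖j m z‖ := norm_nonneg _
    have hd : ‖j x z - j m z‖ ≤ ε * ‖j m z‖ := by
      have t1 := hlip x m z
      rw [hx] at t1
      have t2 : C₀ * ‖z‖ * (‖a‖ / 2) ^ γ ≤ C₀ * ‖z‖ * ((c₀ / C₀) * ε) := by
        apply mul_le_mul_of_nonneg_left hsmall (by positivity)
      have t3 : C₀ * ‖z‖ * ((c₀ / C₀) * ε) = ε * (c₀ * ‖z‖) := by
        field_simp
      have t4 : ε * (c₀ * ‖z‖) ≤ ε * ‖j m z‖ :=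
        mul_le_mul_of_nonneg_left (hlow m z) hε0
      linarith
    have hv : ‖j x z‖ ≤ ‖j m z‖ + ε * ‖j m z‖ := by
      have := norm_sub_norm_le (j x z) (j m z)
      linarith
    constructor
    · nlinarith
    · have cs : |⟪j x z - j m z, a_hat⟫| ≤ ε * ‖j m z‖ := by
        have := abs_real_inner_le_norm (j x z - j m z) a_hat
        rw [hhat, mul_one] at this
        linarith
      have tri : |⟪j m z, a_hat⟫| - |⟪j x z - j m z, a_hat⟫| ≤ |⟪j x z, a_hat⟫| := by
        have hsum : ⟪j m z, a_hat⟫ = ⟪j x z, a_hat⟫ - ⟪j x z - j m z, a_hat⟫ := by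
          rw [inner_sub_left]; ring
        calc |⟪j m z, a_hat⟫| - |⟪j x z - j m z, a_hat⟫|
            ≤ |⟪j x z, a_hat⟫ - ⟪j x z - j m z, a_hat⟫| - |⟪j x z - j m z, a_hat⟫| := by
              rw [← hsum]
          _ ≤ |⟪j x z, a_hat⟫| := by
              have := abs_sub_abs_le_abs_sub (⟪j x z, a_hat⟫ - ⟪j x z - j m z, a_hat⟫) (-⟪j x z - j m z, a_hat⟫)
              simp only [sub_neg_eq_add, sub_add_cancel, abs_neg] at this
              linarith
      have hεw : ε * (4 - η) * ‖j m z‖ = η * ‖j m z‖ := by rw [hεeq]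
      have h3 : (2 * ε - η * ε) * ‖j m z‖ ≤ (η / 2) * ‖j m z‖ := by
        nlinarith [mul_nonneg (mul_nonneg hε0 hη0.le) hw0, hεw]
      have h4 : (1 - η) * ‖j x z‖ ≤ (1 - η) * (‖j m z‖ + ε * ‖j m z‖) :=
        mul_le_mul_of_nonneg_left hv (by linarith : (0:ℝ) ≤ 1 - η)
      nlinarith [h3, h4, tri, cs, h2]
  intro z hz
  obtain ⟨h1, h2⟩ := hz
  have hxm : ‖xb - m‖ = ‖a‖ / 2 := by
    have : xb - m = (2:ℝ)⁻¹ • a := by rw [hm, ha]; module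
    rw [this, norm_smul, Real.norm_eq_abs, abs_of_pos (by norm_num : (0:ℝ) < 2⁻¹)]
    ring
  have hym : ‖yb - m‖ = ‖a‖ / 2 := by
    have : yb - m = -((2:ℝ)⁻¹ • a) := by rw [hm, ha]; module
    rw [this, norm_neg, norm_smul, Real.norm_eq_abs, abs_of_pos (by norm_num : (0:ℝ) < 2⁻¹)]
    ring
  exact ⟨key xb hxm z h1 h2, key yb hym z h1 h2⟩
end

section
/- Let j : ℝ^d × ℝ^d → ℝ^d and c₀, C₀ > 0, γ ∈ (0,1] satisfy c₀‖z‖ ≤ ‖j(x,z)‖ ≤ C₀‖z‖ for all x, z and ‖j(x,z) − j(y,z)‖ ≤ C₀‖z‖·‖x−y‖^γ for all x, y, z. Assume the maximum setup: u, v : ℝ^d → ℝ are bounded Borel measurable, φ : [0,∞) → ℝ is C² with φ' ≥ 0 and φ'' ≤ 0, and ψ(x,y) := u(x) − v(y) − φ(‖x−y‖) attains a global maximum at (x̄, ȳ) with x̄ ≠ ȳ; set a := x̄ − ȳ, â := a/‖a‖, p := φ'(‖a‖)·â and m := (x̄+ȳ)/2. Let δ₀ ∈ (0,1) and η ∈ (0,1/2)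 satisfy 1 − η − δ₀ > 0 and (‖a‖/2)^γ ≤ (c₀/C₀) · η/(4−η); set δ := ‖a‖δ₀, η̃ := (1−η−δ₀)/(1+δ₀), and 𝒞 := { z : ‖j(m,z)‖ ≤ δ/2 and |⟨j(m,z), â⟩| ≥ (1−η/2)‖j(m,z)‖ }. Let μ be a nonnegative Borel measure on ℝ^d for which all integrands appearing below are integrable on 𝒞. Then ∫_𝒞 (u(x̄+j(x̄,z)) − u(x̄) − ⟨p, j(x̄,z)⟩) dμ(z) − ∫_𝒞 (v(ȳ+j(ȳ,z)) − v(ȳ) − ⟨p, j(ȳ,z)⟩) dμ(z) ≤ ∫_𝒞 sup_{s∈[−1,1], x∈{x̄,ȳ}} ( ( (1−η̃²)·φ'(‖a+s·j(x,z)‖)/‖a+s·j(x,z)‖ + η̃²·φ''(‖a+s·j(x,z)‖) ) ‖j(x,z)‖² ) dμ(z). -/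
open MeasureTheory RealInnerProductSpace Set

/-!
At the maximum point `(x̄, ȳ)` the increments of `u` at `x̄` and of `v` at `ȳ` along a jump are
dominated by increments of `φ ‖·‖` at `a = x̄ - ȳ`, so each integrand is bounded by a second-order
Taylor remainder of `s ↦ φ ‖a + s • w‖` on `[0, 1]`. Its second derivative is
`φ'' c² + φ' / r · (‖w‖² - c²)` with `r = ‖a + s • w‖` and `c` the component of `w` along
`a + s • w`; since `φ'' ≤ 0 ≤ φ'`, the lower bound `|c| ≥ η̃ ‖w‖` turns it into the integrand on
the right. That lower bound holds because the Hölder continuity of `j` in `x`, together with the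
smallness of `‖a‖`, moves the cone condition at `m` to `x̄` and `ȳ` at the price of widening the
aperture from `1 - η/2` to `1 - η`.
-/

-- No measurability of `s` is needed: `{g < f}` is null-measurable for `μ.restrict s`.
theorem MeasureTheory.setIntegral_mono_on' {α : Type*} [MeasurableSpace α] {μ : Measure α}
    {s : Set α} {f g : α → ℝ} (hf : IntegrableOn f s μ) (hg : IntegrableOn g s μ)
    (h : ∀ x ∈ s, f x ≤ g x) : ∫ x in s, f x ∂μ ≤ ∫ x in s, g x ∂μ := by
  refine integral_mono_ae hf hg ?_
  have hnull : NullMeasurableSet {x | g x < f x} (μ.restrict s) :=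
    nullMeasurableSet_lt hg.aemeasurable hf.aemeasurable
  rw [Filter.EventuallyLE, ae_iff]
  simp only [not_le]
  rw [Measure.restrict_apply₀ hnull]
  exact measure_mono_null (fun x ⟨hlt, hx⟩ => ((h x hx).not_gt hlt).elim) measure_empty

theorem sub_sub_le_half_of_deriv2_le {F F' F'' : ℝ → ℝ} {K : ℝ}
    (hF : ∀ t ∈ Icc (0:ℝ) 1, HasDerivAt F (F' t) t)
    (hF' : ∀ t ∈ Icc (0:ℝ) 1, HasDerivAt F' (F'' t) t)
    (hK : ∀ t ∈ Icc (0:ℝ) 1, F'' t ≤ K) :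
    F 1 - F 0 - F' 0 ≤ K / 2 := by
  set G : ℝ → ℝ := fun t => F t - F' 0 * t - K / 2 * t ^ 2
  have hG : ∀ t ∈ Icc (0:ℝ) 1, HasDerivAt G (F' t - F' 0 - K * t) t := fun t ht =>
    (((hF t ht).fun_sub (hasDerivAt_const_mul (F' 0))).fun_sub
      ((hasDerivAt_pow 2 t).const_mul (K / 2))).congr_deriv (by push_cast; ring)
  have hG' : ∀ t ∈ Icc (0:ℝ) 1, HasDerivAt (fun t => F' t - F' 0 - K * t) (F'' t - K) t :=
    fun t ht => by
      simpa using ((hF' t ht).sub_const (F' 0)).fun_sub (hasDerivAt_const_mul K)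
  have hconcave : ConcaveOn ℝ (Icc (0:ℝ) 1) G :=
    concaveOn_of_hasDerivWithinAt2_nonpos (convex_Icc 0 1)
      (fun t ht => (hG t ht).continuousAt.continuousWithinAt)
      (fun t ht => (hG t (interior_subset ht)).hasDerivWithinAt)
      (fun t ht => (hG' t (interior_subset ht)).hasDerivWithinAt)
      (fun t ht => sub_nonpos.2 (hK t (interior_subset ht)))
  have h0 : (0:ℝ) ∈ Icc (0:ℝ) 1 := left_mem_Icc.2 zero_le_one
  have hslope : G 1 - G 0 ≤ F' 0 - F' 0 - K * 0 := by
    simpa [slope_def_field] using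
      hconcave.slope_le_of_hasDerivAt h0 (right_mem_Icc.2 zero_le_one) zero_lt_one (hG 0 h0)
  simp only [G] at hslope
  linarith

variable {E : Type*} [NormedAddCommGroup E] [InnerProductSpace ℝ E]

theorem HasDerivAt.norm_of_ne_zero {f : ℝ → E} {f' : E} {t : ℝ} (hf : HasDerivAt f f' t)
    (h0 : f t ≠ 0) : HasDerivAt (fun s => ‖f s‖) (⟪f t, f'⟫ / ‖f t‖) t := by
  have h := hf.norm_sq.sqrt (pow_ne_zero 2 (norm_ne_zero_iff.2 h0))
  simp only [Real.sqrt_sq (norm_nonneg _)] at h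
  convert h using 1
  field_simp

theorem norm_add_smul_pos {a w : E} {s : ℝ} (hw : ‖w‖ < ‖a‖) (hs : |s| ≤ 1) :
    0 < ‖a + s • w‖ := by
  have hsw : ‖s • w‖ ≤ ‖w‖ := by
    rw [norm_smul, Real.norm_eq_abs]
    exact mul_le_of_le_one_left (norm_nonneg w) hs
  have htri := norm_sub_le (a + s • w) (s • w)
  rw [add_sub_cancel_right] at htri
  linarith

theorem norm_sub_midpoint_smul (x y : E) : ‖x - (2:ℝ)⁻¹ • (x + y)‖ = ‖x - y‖ / 2 := by
  rw [show x - (2:ℝ)⁻¹ • (x + y) = (2:ℝ)⁻¹ • (x - y) by module, norm_smul]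
  norm_num
  ring

theorem mul_sq_add_mul_div_le {r c W η d₁ d₂ : ℝ} (hr : 0 < r) (hd₁ : 0 ≤ d₁) (hd₂ : d₂ ≤ 0)
    (hc : η ^ 2 * W ^ 2 ≤ c ^ 2) :
    d₂ * c ^ 2 + d₁ * ((W ^ 2 - c ^ 2) / r) ≤ ((1 - η ^ 2) * d₁ / r + η ^ 2 * d₂) * W ^ 2 := by
  have hgap : 0 ≤ (c ^ 2 - η ^ 2 * W ^ 2) * (d₁ / r - d₂) :=
    mul_nonneg (by linarith) (by linarith [div_nonneg hd₁ hr.le])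
  have hid : ((1 - η ^ 2) * d₁ / r + η ^ 2 * d₂) * W ^ 2 - (d₂ * c ^ 2 + d₁ * ((W ^ 2 - c ^ 2) / r))
      = (c ^ 2 - η ^ 2 * W ^ 2) * (d₁ / r - d₂) := by ring
  linarith

/-- Upper bound for `d²/ds² φ ‖a + s • w‖` when the cosine of the angle between `a + s • w` and
`w` is at least `η` in absolute value. -/
noncomputable def coneSecondDerivBound (φ : ℝ → ℝ) (η : ℝ) (a w : E) (s : ℝ) : ℝ :=
  ((1 - η ^ 2) * deriv φ ‖a + s • w‖ / ‖a + s • w‖ + η ^ 2 * deriv (deriv φ) ‖a + s • w‖) *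
    ‖w‖ ^ 2

theorem coneSecondDerivBound_neg (φ : ℝ → ℝ) (η : ℝ) (a w : E) (s : ℝ) :
    coneSecondDerivBound φ η a (-w) s = coneSecondDerivBound φ η a w (-s) := by
  simp only [coneSecondDerivBound, smul_neg, neg_smul, norm_neg]

theorem continuousOn_coneSecondDerivBound {φ : ℝ → ℝ} (hφ : ContDiff ℝ 2 φ) (η : ℝ) {a w : E}
    (hw : ‖w‖ < ‖a‖) : ContinuousOn (coneSecondDerivBound φ η a w) (Icc (-1) 1) := by
  have hN : Continuous fun s : ℝ => ‖a + s • w‖ := by fun_prop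
  have hφ' : Continuous (deriv φ) := hφ.continuous_deriv one_le_two
  have hφ'' : Continuous (deriv (deriv φ)) := hφ.deriv'.continuous_deriv le_rfl
  have hpos : ∀ s ∈ Icc (-1:ℝ) 1, ‖a + s • w‖ ≠ 0 := fun s hs =>
    (norm_add_smul_pos hw (abs_le.2 hs)).ne'
  exact (((continuous_const.mul (hφ'.comp hN)).continuousOn.div hN.continuousOn hpos).add
    (continuous_const.mul (hφ''.comp hN)).continuousOn).mul continuousOn_const

theorem comp_norm_add_sub_le_of_abs_inner {φ : ℝ → ℝ} (hφ : ContDiff ℝ 2 φ)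
    (hφ' : ∀ t, 0 ≤ t → 0 ≤ deriv φ t) (hφ'' : ∀ t, 0 ≤ t → deriv (deriv φ) t ≤ 0)
    {η K : ℝ} {a w : E} (hη : 0 ≤ η) (hw : ‖w‖ < ‖a‖)
    (hdir : ∀ s ∈ Icc (0:ℝ) 1, η * ‖w‖ * ‖a + s • w‖ ≤ |⟪a + s • w, w⟫|)
    (hK : ∀ s ∈ Icc (0:ℝ) 1, coneSecondDerivBound φ η a w s ≤ K) :
    φ ‖a + w‖ - φ ‖a‖ - deriv φ ‖a‖ * (⟪a, w⟫ / ‖a‖) ≤ K / 2 := by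
  set N : ℝ → ℝ := fun s => ‖a + s • w‖
  set c : ℝ → ℝ := fun s => ⟪a + s • w, w⟫ / N s
  have hN : ∀ s ∈ Icc (0:ℝ) 1, 0 < N s := fun s hs =>
    norm_add_smul_pos hw (abs_le.2 ⟨by linarith [hs.1], hs.2⟩)
  have hline : ∀ s : ℝ, HasDerivAt (fun s : ℝ => a + s • w) w s := fun s => by
    simpa using ((hasDerivAt_id s).smul_const w).const_add a
  have hNd : ∀ s ∈ Icc (0:ℝ) 1, HasDerivAt N (c s) s := fun s hs =>
    (hline s).norm_of_ne_zero (norm_pos_iff.1 (hN s hs))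
  have hcd : ∀ s ∈ Icc (0:ℝ) 1, HasDerivAt c ((‖w‖ ^ 2 - c s ^ 2) / N s) s := fun s hs => by
    have hI : HasDerivAt (fun s : ℝ => ⟪a + s • w, w⟫) (‖w‖ ^ 2) s := by
      simpa [real_inner_self_eq_norm_sq] using (hline s).inner ℝ (hasDerivAt_const s w)
    refine (hI.fun_div (hNd s hs) (hN s hs).ne').congr_deriv ?_
    have hN₀ := (hN s hs).ne'
    simp only [c]
    field_simp
  have hφd : ∀ t, HasDerivAt φ (deriv φ t) t := fun t =>
    (hφ.differentiable two_ne_zero t).hasDerivAt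
  have hφd' : ∀ t, HasDerivAt (deriv φ) (deriv (deriv φ) t) t := fun t =>
    (hφ.deriv'.differentiable one_ne_zero t).hasDerivAt
  have hF'' : ∀ s ∈ Icc (0:ℝ) 1, deriv (deriv φ) (N s) * c s ^ 2
      + deriv φ (N s) * ((‖w‖ ^ 2 - c s ^ 2) / N s) ≤ K := fun s hs => by
    have hr := hN s hs
    have hcos : η * ‖w‖ ≤ |c s| := by
      rw [abs_div, abs_of_pos hr, le_div_iff₀ hr]
      exact hdir s hs
    have hcos_sq : η ^ 2 * ‖w‖ ^ 2 ≤ c s ^ 2 := by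
      simpa [mul_pow] using pow_le_pow_left₀ (by positivity) hcos 2
    exact (mul_sq_add_mul_div_le hr (hφ' _ hr.le) (hφ'' _ hr.le) hcos_sq).trans (hK s hs)
  have hTaylor := sub_sub_le_half_of_deriv2_le (F := fun s => φ (N s))
    (F'' := fun s => deriv (deriv φ) (N s) * c s ^ 2
      + deriv φ (N s) * ((‖w‖ ^ 2 - c s ^ 2) / N s))
    (fun s hs => (hφd _).comp s (hNd s hs))
    (fun s hs => (((hφd' _).comp s (hNd s hs)).mul (hcd s hs)).congr_deriv
      (by simp only [Function.comp_apply]; ring)) hF''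
  simpa [N, c] using hTaylor

theorem div_mul_norm_add_smul_le_abs_inner {η δ₀ s : ℝ} {a w : E} (hδ₀ : 0 ≤ δ₀)
    (hηδ₀ : 0 ≤ 1 - η - δ₀) (hnw : ‖w‖ ≤ ‖a‖ * δ₀)
    (hdw : (1 - η) * ‖w‖ ≤ |⟪w, ‖a‖⁻¹ • a⟫|) (hs : |s| ≤ 1) :
    (1 - η - δ₀) / (1 + δ₀) * ‖w‖ * ‖a + s • w‖ ≤ |⟪a + s • w, w⟫| := by
  have hsw : ‖s • w‖ ≤ ‖w‖ := by
    rw [norm_smul, Real.norm_eq_abs]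
    exact mul_le_of_le_one_left (norm_nonneg w) hs
  have hnorm : ‖a + s • w‖ ≤ (1 + δ₀) * ‖a‖ := by
    linarith [norm_add_le a (s • w)]
  have haw : |⟪a, w⟫| = ‖a‖ * |⟪w, ‖a‖⁻¹ • a⟫| := by
    rcases eq_or_ne a 0 with rfl | ha
    · simp
    · rw [real_inner_smul_right, abs_mul, abs_inv, abs_norm, real_inner_comm,
        mul_inv_cancel_left₀ (norm_ne_zero_iff.2 ha)]
  have hinner : (1 - η - δ₀) * ‖a‖ * ‖w‖ ≤ |⟪a + s • w, w⟫| := by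
    have hsq : |s * ‖w‖ ^ 2| ≤ δ₀ * ‖a‖ * ‖w‖ := by
      rw [abs_mul, abs_of_nonneg (sq_nonneg ‖w‖)]
      nlinarith [abs_nonneg s, norm_nonneg w]
    have haw' : (1 - η) * ‖a‖ * ‖w‖ ≤ |⟪a, w⟫| := by
      rw [haw]
      nlinarith [norm_nonneg a]
    have htri := abs_sub_abs_le_abs_sub ⟪a, w⟫ (-(s * ‖w‖ ^ 2))
    rw [abs_neg, sub_neg_eq_add] at htri
    rw [inner_add_left, real_inner_smul_left, real_inner_self_eq_norm_sq]
    linarith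
  calc (1 - η - δ₀) / (1 + δ₀) * ‖w‖ * ‖a + s • w‖
      ≤ (1 - η - δ₀) / (1 + δ₀) * ‖w‖ * ((1 + δ₀) * ‖a‖) := by gcongr
    _ = (1 - η - δ₀) * ‖a‖ * ‖w‖ := by field_simp
    _ ≤ |⟪a + s • w, w⟫| := hinner

theorem comp_norm_add_sub_le_of_mem_cone {φ : ℝ → ℝ} (hφ : ContDiff ℝ 2 φ)
    (hφ' : ∀ t, 0 ≤ t → 0 ≤ deriv φ t) (hφ'' : ∀ t, 0 ≤ t → deriv (deriv φ) t ≤ 0)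
    {η δ₀ K : ℝ} {a w : E} (ha : a ≠ 0) (hη : 0 ≤ η) (hδ₀ : 0 ≤ δ₀) (hηδ₀ : 0 < 1 - η - δ₀)
    (hnw : ‖w‖ ≤ ‖a‖ * δ₀) (hdw : (1 - η) * ‖w‖ ≤ |⟪w, ‖a‖⁻¹ • a⟫|)
    (hK : ∀ s ∈ Icc (-1:ℝ) 1, coneSecondDerivBound φ ((1 - η - δ₀) / (1 + δ₀)) a w s ≤ K) :
    φ ‖a + w‖ - φ ‖a‖ - ⟪deriv φ ‖a‖ • (‖a‖⁻¹ • a), w⟫ ≤ K / 2 ∧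
      φ ‖a - w‖ - φ ‖a‖ + ⟪deriv φ ‖a‖ • (‖a‖⁻¹ • a), w⟫ ≤ K / 2 := by
  have hpos : 0 < ‖a‖ := norm_pos_iff.2 ha
  have side : ∀ v : E, ‖v‖ ≤ ‖a‖ * δ₀ → (1 - η) * ‖v‖ ≤ |⟪v, ‖a‖⁻¹ • a⟫| →
      (∀ s ∈ Icc (0:ℝ) 1, coneSecondDerivBound φ ((1 - η - δ₀) / (1 + δ₀)) a v s ≤ K) →
      φ ‖a + v‖ - φ ‖a‖ - ⟪deriv φ ‖a‖ • (‖a‖⁻¹ • a), v⟫ ≤ K / 2 := by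
    intro v hnv hdv hKv
    have hv : ‖v‖ < ‖a‖ := hnv.trans_lt (by nlinarith)
    rw [real_inner_smul_left, real_inner_smul_left, inv_mul_eq_div]
    exact comp_norm_add_sub_le_of_abs_inner hφ hφ' hφ'' (div_nonneg hηδ₀.le (by linarith)) hv
      (fun s hs => div_mul_norm_add_smul_le_abs_inner hδ₀ hηδ₀.le hnv hdv
        (abs_le.2 ⟨by linarith [hs.1], hs.2⟩)) hKv
  refine ⟨side w hnw hdw fun s hs => hK s ⟨by linarith [hs.1], hs.2⟩, ?_⟩
  have hneg := side (-w) (by rwa [norm_neg]) (by rwa [norm_neg, inner_neg_left, abs_neg])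
    fun s hs => coneSecondDerivBound_neg φ _ a w s ▸
      hK (-s) ⟨by linarith [hs.2], by linarith [hs.1]⟩
  rwa [← sub_eq_add_neg, inner_neg_right, sub_neg_eq_add] at hneg

theorem one_sub_mul_norm_le_abs_inner_of_near {η : ℝ} {w w₀ e : E} (hη : η ∈ Icc (0:ℝ) 1)
    (he : ‖e‖ ≤ 1) (hnear : ‖w - w₀‖ ≤ η / (4 - η) * ‖w₀‖)
    (hdir : (1 - η / 2) * ‖w₀‖ ≤ |⟪w₀, e⟫|) :
    (1 - η) * ‖w‖ ≤ |⟪w, e⟫| := by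
  set q := η / (4 - η)
  have hq : q * (4 - η) = η := div_mul_cancel₀ η (by linarith [hη.2])
  have hq₀ : 0 ≤ q := div_nonneg hη.1 (by linarith [hη.2])
  have hcoef : (1 - η) * (1 + q) ≤ 1 - η / 2 - q := by nlinarith [hη.1]
  have hinner : |⟪w - w₀, e⟫| ≤ q * ‖w₀‖ :=
    (abs_real_inner_le_norm _ _).trans ((mul_le_of_le_one_right (norm_nonneg _) he).trans hnear)
  have htri := abs_sub_abs_le_abs_sub ⟪w₀, e⟫ (-⟪w - w₀, e⟫)
  rw [abs_neg, sub_neg_eq_add, ← inner_add_left, add_sub_cancel] at htri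
  calc (1 - η) * ‖w‖ ≤ (1 - η) * ((1 + q) * ‖w₀‖) := by
        gcongr
        · linarith [hη.2]
        · linarith [norm_le_norm_add_norm_sub' w w₀]
    _ ≤ (1 - η / 2 - q) * ‖w₀‖ := by rw [← mul_assoc]; gcongr
    _ ≤ |⟪w, e⟫| := by linarith

theorem jump_mem_cone_of_holder {X Z : Type*} [SeminormedAddCommGroup X]
    [SeminormedAddCommGroup Z] {j : X → Z → E} {c₀ C₀ γ η δ : ℝ} {x m : X} {z : Z} {e : E}
    (hC₀ : 0 < C₀) (hη : η ∈ Icc (0:ℝ) 1) (he : ‖e‖ ≤ 1)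
    (hlow : c₀ * ‖z‖ ≤ ‖j m z‖) (hlip : ‖j x z - j m z‖ ≤ C₀ * ‖z‖ * ‖x - m‖ ^ γ)
    (hsmall : ‖x - m‖ ^ γ ≤ c₀ / C₀ * (η / (4 - η)))
    (hz : ‖j m z‖ ≤ δ / 2 ∧ (1 - η / 2) * ‖j m z‖ ≤ |⟪j m z, e⟫|) :
    ‖j x z‖ ≤ δ ∧ (1 - η) * ‖j x z‖ ≤ |⟪j x z, e⟫| := by
  have hq₀ : 0 ≤ η / (4 - η) := div_nonneg hη.1 (by linarith [hη.2])
  have hq₁ : η / (4 - η) ≤ 1 := (div_le_one (by linarith [hη.2])).2 (by linarith [hη.2])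
  have hnear : ‖j x z - j m z‖ ≤ η / (4 - η) * ‖j m z‖ :=
    calc ‖j x z - j m z‖ ≤ C₀ * ‖z‖ * (c₀ / C₀ * (η / (4 - η))) :=
          hlip.trans (by gcongr)
      _ = η / (4 - η) * (c₀ * ‖z‖) := by field_simp
      _ ≤ η / (4 - η) * ‖j m z‖ := by gcongr
  refine ⟨?_, one_sub_mul_norm_le_abs_inner_of_near hη he hnear hz.2⟩
  nlinarith [norm_le_norm_add_norm_sub' (j x z) (j m z), norm_nonneg (j m z)]

theorem le_ciSup_max_of_continuous {X : Type*} [TopologicalSpace X] [CompactSpace X]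
    {f₁ f₂ : X → ℝ} (h₁ : Continuous f₁) (h₂ : Continuous f₂) (x : X) :
    f₁ x ≤ ⨆ y, max (f₁ y) (f₂ y) ∧ f₂ x ≤ ⨆ y, max (f₁ y) (f₂ y) := by
  have hbdd := (isCompact_range (h₁.max h₂)).bddAbove
  exact ⟨(le_max_left _ _).trans (le_ciSup hbdd x), (le_max_right _ _).trans (le_ciSup hbdd x)⟩

theorem doubling_increment_le {X : Type*} [SeminormedAddCommGroup X] {u v : X → ℝ}
    {φ : ℝ → ℝ} {xb yb : X}
    (hmax : ∀ x y, u x - v y - φ ‖x - y‖ ≤ u xb - v yb - φ ‖xb - yb‖) (w₁ w₂ : X) :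
    (u (xb + w₁) - u xb) - (v (yb + w₂) - v yb) ≤
      (φ ‖xb - yb + w₁‖ - φ ‖xb - yb‖) + (φ ‖xb - yb - w₂‖ - φ ‖xb - yb‖) := by
  have h₁ := hmax (xb + w₁) yb
  have h₂ := hmax xb (yb + w₂)
  rw [show xb + w₁ - yb = xb - yb + w₁ by abel] at h₁
  rw [show xb - (yb + w₂) = xb - yb - w₂ by abel] at h₂
  linarith

theorem cone_estimate_levy_ito_general {d : ℕ}
    (j : EuclideanSpace ℝ (Fin d) → EuclideanSpace ℝ (Fin d) → EuclideanSpace ℝ (Fin d))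
    (c₀ C₀ γ : ℝ) (hC₀ : 0 < C₀)
    (hlow : ∀ x z, c₀ * ‖z‖ ≤ ‖j x z‖)
    (hlip : ∀ x y z, ‖j x z - j y z‖ ≤ C₀ * ‖z‖ * ‖x - y‖ ^ γ)
    (u v : EuclideanSpace ℝ (Fin d) → ℝ)
    (φ : ℝ → ℝ) (hφ : ContDiff ℝ 2 φ)
    (hφ' : ∀ t : ℝ, 0 ≤ t → 0 ≤ deriv φ t)
    (hφ'' : ∀ t : ℝ, 0 ≤ t → deriv (deriv φ) t ≤ 0)
    (xb yb : EuclideanSpace ℝ (Fin d)) (hxy : xb ≠ yb)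
    (hmax : ∀ x y, u x - v y - φ ‖x - y‖ ≤ u xb - v yb - φ ‖xb - yb‖)
    (a : EuclideanSpace ℝ (Fin d)) (ha : a = xb - yb)
    (a_hat : EuclideanSpace ℝ (Fin d)) (ha_hat : a_hat = ‖a‖⁻¹ • a)
    (p : EuclideanSpace ℝ (Fin d)) (hp : p = deriv φ ‖a‖ • a_hat)
    (m : EuclideanSpace ℝ (Fin d)) (hm : m = (2:ℝ)⁻¹ • (xb + yb))
    (δ₀ η : ℝ) (hδ₀ : δ₀ ∈ Ioo (0:ℝ) 1) (hη : η ∈ Ioo (0:ℝ) (1/2))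
    (hηδ₀ : 0 < 1 - η - δ₀)
    (hsmall : (‖a‖ / 2) ^ γ ≤ (c₀ / C₀) * (η / (4 - η)))
    (δ eta_t : ℝ) (hδ : δ = ‖a‖ * δ₀) (heta_t : eta_t = (1 - η - δ₀) / (1 + δ₀))
    (Cone : Set (EuclideanSpace ℝ (Fin d)))
    (hCone : Cone = {z | ‖j m z‖ ≤ δ / 2 ∧ (1 - η / 2) * ‖j m z‖ ≤ abs ⟪j m z, a_hat⟫})
    (μ : Measure (EuclideanSpace ℝ (Fin d)))
    (g : EuclideanSpace ℝ (Fin d) → ℝ)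
    (hg : ∀ z, g z = ⨆ s : Icc (-1:ℝ) 1,
        max (((1 - eta_t ^ 2) * deriv φ ‖a + (s : ℝ) • j xb z‖ / ‖a + (s : ℝ) • j xb z‖
                + eta_t ^ 2 * deriv (deriv φ) ‖a + (s : ℝ) • j xb z‖) * ‖j xb z‖ ^ 2)
            (((1 - eta_t ^ 2) * deriv φ ‖a + (s : ℝ) • j yb z‖ / ‖a + (s : ℝ) • j yb z‖
                + eta_t ^ 2 * deriv (deriv φ) ‖a + (s : ℝ) • j yb z‖) * ‖j yb z‖ ^ 2))
    (hint1 : IntegrableOn (fun z => u (xb + j xb z) - u xb - ⟪p, j xb z⟫) Cone μ)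
    (hint2 : IntegrableOn (fun z => v (yb + j yb z) - v yb - ⟪p, j yb z⟫) Cone μ)
    (hint3 : IntegrableOn g Cone μ) :
    (∫ z in Cone, (u (xb + j xb z) - u xb - ⟪p, j xb z⟫) ∂μ)
      - ∫ z in Cone, (v (yb + j yb z) - v yb - ⟪p, j yb z⟫) ∂μ
    ≤ ∫ z in Cone, g z ∂μ := by
  subst hp ha_hat hδ
  have ha₀ : a ≠ 0 := ha ▸ sub_ne_zero.2 hxy
  have hxm : ‖xb - m‖ = ‖a‖ / 2 := by rw [hm, norm_sub_midpoint_smul, ha]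
  have hym : ‖yb - m‖ = ‖a‖ / 2 := by rw [hm, add_comm, norm_sub_midpoint_smul, ha, norm_sub_rev]
  have hη₁ : η ∈ Icc (0:ℝ) 1 := ⟨hη.1.le, by linarith [hη.2]⟩
  have he : ‖‖a‖⁻¹ • a‖ ≤ 1 := by simp [norm_smul, ha₀]
  have hδ₀a : ‖a‖ * δ₀ < ‖a‖ := mul_lt_of_lt_one_right (norm_pos_iff.2 ha₀) hδ₀.2
  refine (integral_sub hint1 hint2).symm.trans_le
    (setIntegral_mono_on' (hint1.sub hint2) hint3 fun z hz => ?_)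
  rw [hCone] at hz
  obtain ⟨hx₁, hx₂⟩ := jump_mem_cone_of_holder hC₀ hη₁ he (hlow m z) (hlip xb m z)
    (hxm ▸ hsmall) hz
  obtain ⟨hy₁, hy₂⟩ := jump_mem_cone_of_holder hC₀ hη₁ he (hlow m z) (hlip yb m z)
    (hym ▸ hsmall) hz
  have hK : ∀ s ∈ Icc (-1:ℝ) 1,
      coneSecondDerivBound φ eta_t a (j xb z) s ≤ g z ∧
        coneSecondDerivBound φ eta_t a (j yb z) s ≤ g z := fun s hs => by
    rw [hg z]
    exact le_ciSup_max_of_continuous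
      (continuousOn_coneSecondDerivBound hφ _ (hx₁.trans_lt hδ₀a)).domRestrict
      (continuousOn_coneSecondDerivBound hφ _ (hy₁.trans_lt hδ₀a)).domRestrict ⟨s, hs⟩
  subst heta_t
  have hx := (comp_norm_add_sub_le_of_mem_cone hφ hφ' hφ'' ha₀ hη.1.le hδ₀.1.le hηδ₀ hx₁ hx₂
    fun s hs => (hK s hs).1).1
  have hy := (comp_norm_add_sub_le_of_mem_cone hφ hφ' hφ'' ha₀ hη.1.le hδ₀.1.le hηδ₀ hy₁ hy₂
    fun s hs => (hK s hs).2).2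
  subst ha
  linarith [doubling_increment_le hmax (j xb z) (j yb z)]

/-- **Concave estimate on the cone for Lévy–Itô operators (Lemma est_LI2).**
In the maximum setup, with a jump function `j` satisfying the nondegeneracy and Hölder
conditions, the difference of the Lévy–Itô nonlocal terms over the middle cone `𝒞` is
bounded by `∫_𝒞 sup_{|s|≤1, x∈{x̄,ȳ}} ((1−η̃²)φ'(‖a+sj(x,z)‖)/‖a+sj(x,z)‖ +
η̃²φ''(‖a+sj(x,z)‖))‖j(x,z)‖² dμ`. -/
theorem cone_estimate_levy_ito {d : ℕ}
    (j : EuclideanSpace ℝ (Fin d) → EuclideanSpace ℝ (Fin d) → EuclideanSpace ℝ (Fin d))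
    (c₀ C₀ γ : ℝ) (hc₀ : 0 < c₀) (hC₀ : 0 < C₀) (hγ : γ ∈ Ioc (0:ℝ) 1)
    (hlow : ∀ x z, c₀ * ‖z‖ ≤ ‖j x z‖)
    (hup : ∀ x z, ‖j x z‖ ≤ C₀ * ‖z‖)
    (hlip : ∀ x y z, ‖j x z - j y z‖ ≤ C₀ * ‖z‖ * ‖x - y‖ ^ γ)
    (u v : EuclideanSpace ℝ (Fin d) → ℝ)
    (hum : Measurable u) (hvm : Measurable v)
    (hub : ∃ C, ∀ x, |u x| ≤ C) (hvb : ∃ C, ∀ x, |v x| ≤ C)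
    (φ : ℝ → ℝ) (hφ : ContDiff ℝ 2 φ)
    (hφ' : ∀ t : ℝ, 0 ≤ t → 0 ≤ deriv φ t)
    (hφ'' : ∀ t : ℝ, 0 ≤ t → deriv (deriv φ) t ≤ 0)
    (xb yb : EuclideanSpace ℝ (Fin d)) (hxy : xb ≠ yb)
    (hmax : ∀ x y, u x - v y - φ ‖x - y‖ ≤ u xb - v yb - φ ‖xb - yb‖)
    (a : EuclideanSpace ℝ (Fin d)) (ha : a = xb - yb)
    (a_hat : EuclideanSpace ℝ (Fin d)) (ha_hat : a_hat = ‖a‖⁻¹ • a)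
    (p : EuclideanSpace ℝ (Fin d)) (hp : p = deriv φ ‖a‖ • a_hat)
    (m : EuclideanSpace ℝ (Fin d)) (hm : m = (2:ℝ)⁻¹ • (xb + yb))
    (δ₀ η : ℝ) (hδ₀ : δ₀ ∈ Ioo (0:ℝ) 1) (hη : η ∈ Ioo (0:ℝ) (1/2))
    (hηδ₀ : 0 < 1 - η - δ₀)
    (hsmall : (‖a‖ / 2) ^ γ ≤ (c₀ / C₀) * (η / (4 - η)))
    (δ eta_t : ℝ) (hδ : δ = ‖a‖ * δ₀) (heta_t : eta_t = (1 - η - δ₀) / (1 + δ₀))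
    (Cone : Set (EuclideanSpace ℝ (Fin d)))
    (hCone : Cone = {z | ‖j m z‖ ≤ δ / 2 ∧ (1 - η / 2) * ‖j m z‖ ≤ abs ⟪j m z, a_hat⟫})
    (μ : Measure (EuclideanSpace ℝ (Fin d)))
    (g : EuclideanSpace ℝ (Fin d) → ℝ)
    (hg : ∀ z, g z = ⨆ s : Icc (-1:ℝ) 1,
        max (((1 - eta_t ^ 2) * deriv φ ‖a + (s : ℝ) • j xb z‖ / ‖a + (s : ℝ) • j xb z‖
                + eta_t ^ 2 * deriv (deriv φ) ‖a + (s : ℝ) • j xb z‖) * ‖j xb z‖ ^ 2)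
            (((1 - eta_t ^ 2) * deriv φ ‖a + (s : ℝ) • j yb z‖ / ‖a + (s : ℝ) • j yb z‖
                + eta_t ^ 2 * deriv (deriv φ) ‖a + (s : ℝ) • j yb z‖) * ‖j yb z‖ ^ 2))
    (hint1 : IntegrableOn (fun z => u (xb + j xb z) - u xb - ⟪p, j xb z⟫) Cone μ)
    (hint2 : IntegrableOn (fun z => v (yb + j yb z) - v yb - ⟪p, j yb z⟫) Cone μ)
    (hint3 : IntegrableOn g Cone μ) :
    (∫ z in Cone, (u (xb + j xb z) - u xb - ⟪p, j xb z⟫) ∂μ)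
      - ∫ z in Cone, (v (yb + j yb z) - v yb - ⟪p, j yb z⟫) ∂μ
    ≤ ∫ z in Cone, g z ∂μ :=
  cone_estimate_levy_ito_general j c₀ C₀ γ hC₀ hlow hlip u v φ hφ hφ' hφ'' xb yb hxy hmax a ha a_hat
    ha_hat p hp m hm δ₀ η hδ₀ hη hηδ₀ hsmall δ eta_t hδ heta_t Cone hCone μ g hg hint1 hint2 hint3
end

section
/- Assume the quadratic maximum setup: u, v : ℝ^d → ℝ are bounded Borel measurable, ε > 0, and ψ_ε(x,y) := u(x) − v(y) − ε⁻²‖x−y‖² attains a global maximum at (x̄, ȳ); set p := 2(x̄−ȳ)/ε². Let C₀ > 0 and let j : ℝ^d × ℝ^d → ℝ^d be Borel measurable with ‖j(x,z)‖ ≤ C₀‖z‖ for all x, z. Let δ > 0 and let μ be a nonnegative Borel measure on ℝ^d with ∫_{B_δ} ‖z‖² dμ(z) < ∞, the integrands below being μ-integrable on B_δ. Then ∫_{B_δ} ( u(x̄+j(x̄,z)) − u(x̄) − ⟨p, j(x̄,z)⟩ ) dμ(z) − ∫_{B_δ} ( v(ȳ+j(ȳ,z)) − v(ȳ) − ⟨p,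 j(ȳ,z)⟩ ) dμ(z) ≤ 2C₀²ε⁻² ∫_{B_δ} ‖z‖² dμ(z). -/
open MeasureTheory RealInnerProductSpace Set

/-- **Quadratic estimate near the origin for Lévy–Itô operators (Lemma est_Tq1).**
In the quadratic maximum setup, with `‖j(x,z)‖ ≤ C₀‖z‖`, the difference of the nonlocal
terms over `B_δ` is bounded by `2C₀²ε⁻²∫_{B_δ}‖z‖² dμ`. -/
theorem quadratic_estimate_small_jumps {d : ℕ}
    (u v : EuclideanSpace ℝ (Fin d) → ℝ)
    (hum : Measurable u) (hvm : Measurable v)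
    (hub : ∃ C, ∀ x, |u x| ≤ C) (hvb : ∃ C, ∀ x, |v x| ≤ C)
    (ε : ℝ) (hε : 0 < ε)
    (xb yb : EuclideanSpace ℝ (Fin d))
    (hmax : ∀ x y, u x - v y - (ε ^ 2)⁻¹ * ‖x - y‖ ^ 2
      ≤ u xb - v yb - (ε ^ 2)⁻¹ * ‖xb - yb‖ ^ 2)
    (p : EuclideanSpace ℝ (Fin d)) (hp : p = (2 / ε ^ 2) • (xb - yb))
    (C₀ : ℝ) (hC₀ : 0 < C₀)
    (j : EuclideanSpace ℝ (Fin d) → EuclideanSpace ℝ (Fin d) → EuclideanSpace ℝ (Fin d))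
    (hj : Measurable (Function.uncurry j))
    (hup : ∀ x z, ‖j x z‖ ≤ C₀ * ‖z‖)
    (δ : ℝ) (hδ : 0 < δ)
    (μ : Measure (EuclideanSpace ℝ (Fin d)))
    (hμ : IntegrableOn (fun z => ‖z‖ ^ 2) (Metric.closedBall 0 δ) μ)
    (hintu : IntegrableOn (fun z => u (xb + j xb z) - u xb - ⟪p, j xb z⟫)
      (Metric.closedBall 0 δ) μ)
    (hintv : IntegrableOn (fun z => v (yb + j yb z) - v yb - ⟪p, j yb z⟫)
      (Metric.closedBall 0 δ) μ) :
    (∫ z in Metric.closedBall 0 δ, (u (xb + j xb z) - u xb - ⟪p, j xb z⟫) ∂μ)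
      - ∫ z in Metric.closedBall 0 δ, (v (yb + j yb z) - v yb - ⟪p, j yb z⟫) ∂μ
    ≤ 2 * C₀ ^ 2 * (ε ^ 2)⁻¹ * ∫ z in Metric.closedBall 0 δ, ‖z‖ ^ 2 ∂μ := by
  have hε2 : (0:ℝ) < ε ^ 2 := by positivity
  have hinv : (0:ℝ) < (ε ^ 2)⁻¹ := by positivity
  have key : ∀ z, (u (xb + j xb z) - u xb - ⟪p, j xb z⟫)
      - (v (yb + j yb z) - v yb - ⟪p, j yb z⟫)
      ≤ 2 * C₀ ^ 2 * (ε ^ 2)⁻¹ * ‖z‖ ^ 2 := by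
    intro z
    set a := j xb z with ha
    set b := j yb z with hb
    have h1 := hmax (xb + a) yb
    have h2 := hmax xb (yb + b)
    have ea : ‖xb + a - yb‖ ^ 2 = ‖xb - yb‖ ^ 2 + 2 * ⟪xb - yb, a⟫ + ‖a‖ ^ 2 := by
      rw [show xb + a - yb = (xb - yb) + a by abel, norm_add_sq_real]
    have eb : ‖xb - (yb + b)‖ ^ 2 = ‖xb - yb‖ ^ 2 - 2 * ⟪xb - yb, b⟫ + ‖b‖ ^ 2 := by
      rw [show xb - (yb + b) = (xb - yb) - b by abel, norm_sub_sq_real]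
    have hpa : ⟪p, a⟫ = 2 * (ε ^ 2)⁻¹ * ⟪xb - yb, a⟫ := by
      rw [hp, real_inner_smul_left]; ring
    have hpb : ⟪p, b⟫ = 2 * (ε ^ 2)⁻¹ * ⟪xb - yb, b⟫ := by
      rw [hp, real_inner_smul_left]; ring
    have hna : ‖a‖ ^ 2 ≤ C₀ ^ 2 * ‖z‖ ^ 2 := by
      nlinarith [hup xb z, norm_nonneg (j xb z), norm_nonneg z]
    have hnb : ‖b‖ ^ 2 ≤ C₀ ^ 2 * ‖z‖ ^ 2 := by
      nlinarith [hup yb z, norm_nonneg (j yb z), norm_nonneg z]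
    rw [ea] at h1
    rw [eb] at h2
    have H1 : u (xb + a) - u xb - ⟪p, a⟫ ≤ (ε ^ 2)⁻¹ * ‖a‖ ^ 2 := by
      rw [hpa]; linarith [h1]
    have H2 : -(v (yb + b) - v yb - ⟪p, b⟫) ≤ (ε ^ 2)⁻¹ * ‖b‖ ^ 2 := by
      rw [hpb]; linarith [h2]
    have Ha := mul_le_mul_of_nonneg_left hna hinv.le
    have Hb := mul_le_mul_of_nonneg_left hnb hinv.le
    linarith
  rw [← integral_sub hintu hintv]
  calc (∫ z in Metric.closedBall 0 δ,
        ((u (xb + j xb z) - u xb - ⟪p, j xb z⟫)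
          - (v (yb + j yb z) - v yb - ⟪p, j yb z⟫)) ∂μ)
      ≤ ∫ z in Metric.closedBall 0 δ, 2 * C₀ ^ 2 * (ε ^ 2)⁻¹ * ‖z‖ ^ 2 ∂μ := by
        exact integral_mono (hintu.sub hintv) (hμ.const_mul _) key
    _ = 2 * C₀ ^ 2 * (ε ^ 2)⁻¹ * ∫ z in Metric.closedBall 0 δ, ‖z‖ ^ 2 ∂μ := by
        exact integral_const_mul _ _
end

section
/- Assume the quadratic maximum setup: u, v : ℝ^d → ℝ are bounded Borel measurable, ε > 0, and ψ_ε(x,y) := u(x) − v(y) − ε⁻²‖x−y‖² attains a global maximum at (x̄, ȳ); set a := x̄ − ȳ and p := 2(x̄−ȳ)/ε². Let γ ∈ (0,1], C₀ > 0, and let j : ℝ^d × ℝ^d → ℝ^d be Borel measurable with ‖j(x,z) − j(y,z)‖ ≤ C₀‖z‖·‖x−y‖^γ for all x, y and all z ∈ B. Let 0 < δ ≤ 1 and let μ be a nonnegative Borel measure on ℝ^d with ∫_{B \ B_δ} ‖z‖² dμ(z) < ∞, the integrands below being μ-integrable on B \ B_δ. Then ∫_{B \ B_δ} ( u(x̄+j(x̄,z))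 − u(x̄) − ⟨p, j(x̄,z)⟩ ) dμ(z) − ∫_{B \ B_δ} ( v(ȳ+j(ȳ,z)) − v(ȳ) − ⟨p, j(ȳ,z)⟩ ) dμ(z) ≤ C₀²‖a‖^{2γ}ε⁻² ∫_{B \ B_δ} ‖z‖² dμ(z). -/
open MeasureTheory RealInnerProductSpace Set

/-- **Quadratic estimate on the ring for Lévy–Itô operators (Lemma est_Tq2).**
In the quadratic maximum setup, with `‖j(x,z) − j(y,z)‖ ≤ C₀‖z‖‖x−y‖^γ` on `B`, the
difference of the nonlocal terms over `B \ B_δ` is bounded by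
`C₀²‖a‖^{2γ}ε⁻²∫_{B∖B_δ}‖z‖² dμ`. -/
theorem quadratic_estimate_ring {d : ℕ}
    (u v : EuclideanSpace ℝ (Fin d) → ℝ)
    (hum : Measurable u) (hvm : Measurable v)
    (hub : ∃ C, ∀ x, |u x| ≤ C) (hvb : ∃ C, ∀ x, |v x| ≤ C)
    (ε : ℝ) (hε : 0 < ε)
    (xb yb : EuclideanSpace ℝ (Fin d))
    (hmax : ∀ x y, u x - v y - (ε ^ 2)⁻¹ * ‖x - y‖ ^ 2
      ≤ u xb - v yb - (ε ^ 2)⁻¹ * ‖xb - yb‖ ^ 2)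
    (a : EuclideanSpace ℝ (Fin d)) (ha : a = xb - yb)
    (p : EuclideanSpace ℝ (Fin d)) (hp : p = (2 / ε ^ 2) • (xb - yb))
    (γ C₀ : ℝ) (hγ : γ ∈ Ioc (0:ℝ) 1) (hC₀ : 0 < C₀)
    (j : EuclideanSpace ℝ (Fin d) → EuclideanSpace ℝ (Fin d) → EuclideanSpace ℝ (Fin d))
    (hj : Measurable (Function.uncurry j))
    (hlip : ∀ x y z, z ∈ Metric.closedBall (0 : EuclideanSpace ℝ (Fin d)) 1 →
      ‖j x z - j y z‖ ≤ C₀ * ‖z‖ * ‖x - y‖ ^ γ)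
    (δ : ℝ) (hδ0 : 0 < δ) (hδ1 : δ ≤ 1)
    (μ : Measure (EuclideanSpace ℝ (Fin d)))
    (hμ : IntegrableOn (fun z => ‖z‖ ^ 2)
      (Metric.closedBall 0 1 \ Metric.closedBall 0 δ) μ)
    (hintu : IntegrableOn (fun z => u (xb + j xb z) - u xb - ⟪p, j xb z⟫)
      (Metric.closedBall 0 1 \ Metric.closedBall 0 δ) μ)
    (hintv : IntegrableOn (fun z => v (yb + j yb z) - v yb - ⟪p, j yb z⟫)
      (Metric.closedBall 0 1 \ Metric.closedBall 0 δ) μ) :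
    (∫ z in Metric.closedBall 0 1 \ Metric.closedBall 0 δ,
        (u (xb + j xb z) - u xb - ⟪p, j xb z⟫) ∂μ)
      - ∫ z in Metric.closedBall 0 1 \ Metric.closedBall 0 δ,
          (v (yb + j yb z) - v yb - ⟪p, j yb z⟫) ∂μ
    ≤ C₀ ^ 2 * ‖a‖ ^ (2 * γ) * (ε ^ 2)⁻¹
        * ∫ z in Metric.closedBall 0 1 \ Metric.closedBall 0 δ, ‖z‖ ^ 2 ∂μ := by

  set S := Metric.closedBall (0 : EuclideanSpace ℝ (Fin d)) 1 \ Metric.closedBall 0 δ with hS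
  have hc : 0 ≤ C₀ ^ 2 * ‖a‖ ^ (2 * γ) * (ε ^ 2)⁻¹ := by positivity
  have key : ∀ z ∈ S,
      (u (xb + j xb z) - u xb - ⟪p, j xb z⟫) - (v (yb + j yb z) - v yb - ⟪p, j yb z⟫)
      ≤ C₀ ^ 2 * ‖a‖ ^ (2 * γ) * (ε ^ 2)⁻¹ * ‖z‖ ^ 2 := by
    intro z hz
    have hzB : z ∈ Metric.closedBall (0 : EuclideanSpace ℝ (Fin d)) 1 := hz.1
    set w := j xb z - j yb z with hw
    have hwle : ‖w‖ ≤ C₀ * ‖z‖ * ‖a‖ ^ γ := by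
      rw [ha]; exact hlip xb yb z hzB
    have hmax' := hmax (xb + j xb z) (yb + j yb z)
    have hrw : xb + j xb z - (yb + j yb z) = a + w := by
      rw [ha, hw]; abel
    have hnorm : ‖a + w‖ ^ 2 = ‖a‖ ^ 2 + 2 * ⟪a, w⟫ + ‖w‖ ^ 2 := by
      rw [@norm_add_sq_real]
    have hpw : ⟪p, j xb z⟫ - ⟪p, j yb z⟫ = (2 / ε ^ 2) * ⟪a, w⟫ := by
      rw [← inner_sub_right, hp, ha, real_inner_smul_left]
    have hε2 : (0:ℝ) < ε ^ 2 := by positivity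
    have h1 : (u (xb + j xb z) - u xb - ⟪p, j xb z⟫)
        - (v (yb + j yb z) - v yb - ⟪p, j yb z⟫) ≤ (ε ^ 2)⁻¹ * ‖w‖ ^ 2 := by
      rw [hrw, hnorm, ← ha] at hmax'
      rw [div_eq_mul_inv] at hpw
      linarith [hpw]
    have h2 : ‖w‖ ^ 2 ≤ C₀ ^ 2 * ‖a‖ ^ (2 * γ) * ‖z‖ ^ 2 := by
      have hw0 : (0:ℝ) ≤ ‖w‖ := norm_nonneg _
      have hrhs : C₀ ^ 2 * ‖a‖ ^ (2 * γ) * ‖z‖ ^ 2 = (C₀ * ‖z‖ * ‖a‖ ^ γ) ^ 2 := by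
        rw [mul_comm (2:ℝ) γ, Real.rpow_mul (norm_nonneg a), Real.rpow_two]
        ring
      rw [hrhs]
      exact pow_le_pow_left₀ hw0 hwle 2
    calc (u (xb + j xb z) - u xb - ⟪p, j xb z⟫)
        - (v (yb + j yb z) - v yb - ⟪p, j yb z⟫) ≤ (ε ^ 2)⁻¹ * ‖w‖ ^ 2 := h1
      _ ≤ (ε ^ 2)⁻¹ * (C₀ ^ 2 * ‖a‖ ^ (2 * γ) * ‖z‖ ^ 2) := by
          exact mul_le_mul_of_nonneg_left h2 (by positivity)
      _ = C₀ ^ 2 * ‖a‖ ^ (2 * γ) * (ε ^ 2)⁻¹ * ‖z‖ ^ 2 := by ring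
  rw [← integral_sub hintu hintv, ← integral_const_mul]
  have hSm : MeasurableSet S := measurableSet_closedBall.diff measurableSet_closedBall
  exact setIntegral_mono_on (hintu.sub hintv) (hμ.const_mul _) hSm key
end

section
/- Assume the quadratic maximum setup: u, v : ℝ^d → ℝ are bounded Borel measurable, ε > 0, and ψ_ε(x,y) := u(x) − v(y) − ε⁻²‖x−y‖² attains a global maximum at (x̄, ȳ); set a := x̄ − ȳ. Let γ ∈ (0,1], C̃₀ > 0, and let j : ℝ^d × ℝ^d → ℝ^d be Borel measurable with ‖j(x,z) − j(y,z)‖ ≤ C̃₀‖x−y‖^γ for all x, y and all z ∉ B. Let μ be a nonnegative Borel measure on ℝ^d with μ(ℝ^d \ B) < ∞, the integrands below being μ-integrable on ℝ^d \ B. Then ∫_{ℝ^d \ B} ( u(x̄+j(x̄,z)) − u(x̄) ) dμ(z) − ∫_{ℝ^d \ B} ( v(ȳ+j(ȳ,z)) − v(ȳ) ) dμ(z) ≤ ( C̃₀²‖a‖^{2γ} + 2C̃₀‖a‖^{γ+1} ) ε⁻² μ(ℝ^d \ B). -/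
open MeasureTheory RealInnerProductSpace Set

/-! Comparing the maximum of `ψ_ε` at `(x̄, ȳ)` with its value at `(x̄ + j(x̄,z), ȳ + j(ȳ,z))`
bounds the integrand pointwise by `ε⁻² (‖w‖² + 2‖a‖‖w‖)` with `w = j(x̄,z) − j(ȳ,z)`, since
`‖a + w‖² − ‖a‖² ≤ ‖w‖² + 2‖a‖‖w‖`. The Hölder bound `‖w‖ ≤ C̃₀‖a‖^γ` makes this a constant,
and integrating the constant over `ℝ^d \ B` gives the estimate. -/

lemma sq_norm_add_sub_sq_norm_le {E : Type*} [SeminormedAddCommGroup E] (a w : E) :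
    ‖a + w‖ ^ 2 - ‖a‖ ^ 2 ≤ ‖w‖ ^ 2 + 2 * ‖a‖ * ‖w‖ := by
  have h := pow_le_pow_left₀ (norm_nonneg _) (norm_add_le a w) 2
  linarith

lemma increment_sub_increment_le_of_max {E : Type*} [SeminormedAddCommGroup E]
    {u v : E → ℝ} {c : ℝ} (hc : 0 ≤ c) {xb yb : E}
    (hmax : ∀ x y, u x - v y - c * ‖x - y‖ ^ 2 ≤ u xb - v yb - c * ‖xb - yb‖ ^ 2)
    {p q : E} {L : ℝ} (hpq : ‖p - q‖ ≤ L) :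
    (u (xb + p) - u xb) - (v (yb + q) - v yb) ≤ c * (L ^ 2 + 2 * ‖xb - yb‖ * L) := by
  have hψ := hmax (xb + p) (yb + q)
  rw [show xb + p - (yb + q) = (xb - yb) + (p - q) by abel] at hψ
  have hsq : ‖xb - yb + (p - q)‖ ^ 2 - ‖xb - yb‖ ^ 2 ≤ L ^ 2 + 2 * ‖xb - yb‖ * L := by
    have := sq_norm_add_sub_sq_norm_le (xb - yb) (p - q)
    nlinarith [norm_nonneg (p - q), norm_nonneg (xb - yb)]
  nlinarith [mul_le_mul_of_nonneg_left hsq hc]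

lemma setIntegral_le_mul_measureReal_of_forall_le {X : Type*} [MeasurableSpace X]
    {μ : Measure X} {s : Set X} {f : X → ℝ} {K : ℝ} (hs : MeasurableSet s) (hμs : μ s ≠ ⊤)
    (hf : IntegrableOn f s μ) (hfK : ∀ x ∈ s, f x ≤ K) :
    ∫ x in s, f x ∂μ ≤ K * μ.real s := by
  calc ∫ x in s, f x ∂μ ≤ ∫ _ in s, K ∂μ := setIntegral_mono_on hf (integrableOn_const hμs) hs hfK
    _ = K * μ.real s := by rw [setIntegral_const, smul_eq_mul, mul_comm]

theorem quadratic_estimate_tail_general {d : ℕ}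
    (u v : EuclideanSpace ℝ (Fin d) → ℝ)
    (ε : ℝ)
    (xb yb : EuclideanSpace ℝ (Fin d))
    (hmax : ∀ x y, u x - v y - (ε ^ 2)⁻¹ * ‖x - y‖ ^ 2
      ≤ u xb - v yb - (ε ^ 2)⁻¹ * ‖xb - yb‖ ^ 2)
    (a : EuclideanSpace ℝ (Fin d)) (ha : a = xb - yb)
    (γ Ct₀ : ℝ) (hγ : γ ∈ Ioc (0:ℝ) 1)
    (j : EuclideanSpace ℝ (Fin d) → EuclideanSpace ℝ (Fin d) → EuclideanSpace ℝ (Fin d))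
    (hlip' : ∀ x y z, z ∉ Metric.closedBall (0 : EuclideanSpace ℝ (Fin d)) 1 →
      ‖j x z - j y z‖ ≤ Ct₀ * ‖x - y‖ ^ γ)
    (μ : Measure (EuclideanSpace ℝ (Fin d)))
    (hμ : μ (Metric.closedBall (0 : EuclideanSpace ℝ (Fin d)) 1)ᶜ ≠ ⊤)
    (hintu : IntegrableOn (fun z => u (xb + j xb z) - u xb)
      (Metric.closedBall (0 : EuclideanSpace ℝ (Fin d)) 1)ᶜ μ)
    (hintv : IntegrableOn (fun z => v (yb + j yb z) - v yb)
      (Metric.closedBall (0 : EuclideanSpace ℝ (Fin d)) 1)ᶜ μ) :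
    (∫ z in (Metric.closedBall (0 : EuclideanSpace ℝ (Fin d)) 1)ᶜ,
        (u (xb + j xb z) - u xb) ∂μ)
      - ∫ z in (Metric.closedBall (0 : EuclideanSpace ℝ (Fin d)) 1)ᶜ,
          (v (yb + j yb z) - v yb) ∂μ
    ≤ (Ct₀ ^ 2 * ‖a‖ ^ (2 * γ) + 2 * Ct₀ * ‖a‖ ^ (γ + 1)) * (ε ^ 2)⁻¹
        * (μ (Metric.closedBall (0 : EuclideanSpace ℝ (Fin d)) 1)ᶜ).toReal := by
  subst ha
  set L := Ct₀ * ‖xb - yb‖ ^ γ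
  have hconst : Ct₀ ^ 2 * ‖xb - yb‖ ^ (2 * γ) + 2 * Ct₀ * ‖xb - yb‖ ^ (γ + 1)
      = L ^ 2 + 2 * ‖xb - yb‖ * L := by
    rw [mul_comm 2 γ, Real.rpow_mul (norm_nonneg _), Real.rpow_two,
      Real.rpow_add_one' (norm_nonneg _) (by linarith [hγ.1])]
    ring
  have hpoint : ∀ z ∈ (Metric.closedBall (0 : EuclideanSpace ℝ (Fin d)) 1)ᶜ,
      (u (xb + j xb z) - u xb) - (v (yb + j yb z) - v yb)
        ≤ (ε ^ 2)⁻¹ * (L ^ 2 + 2 * ‖xb - yb‖ * L) := fun z hz =>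
    increment_sub_increment_le_of_max (by positivity) hmax (hlip' xb yb z hz)
  rw [← integral_sub hintu hintv, hconst, ← measureReal_def, mul_comm _ (ε ^ 2)⁻¹]
  exact setIntegral_le_mul_measureReal_of_forall_le measurableSet_closedBall.compl hμ
    (hintu.sub hintv) hpoint

/-- **Quadratic estimate at infinity for Lévy–Itô operators (Lemma est_Tq3).**
In the quadratic maximum setup, with `‖j(x,z) − j(y,z)‖ ≤ C̃₀‖x−y‖^γ` outside `B`, the
difference of the nonlocal terms over `ℝ^d \ B` is bounded by
`(C̃₀²‖a‖^{2γ} + 2C̃₀‖a‖^{γ+1})ε⁻²μ(ℝ^d \ B)`. -/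
theorem quadratic_estimate_tail {d : ℕ}
    (u v : EuclideanSpace ℝ (Fin d) → ℝ)
    (hum : Measurable u) (hvm : Measurable v)
    (hub : ∃ C, ∀ x, |u x| ≤ C) (hvb : ∃ C, ∀ x, |v x| ≤ C)
    (ε : ℝ) (hε : 0 < ε)
    (xb yb : EuclideanSpace ℝ (Fin d))
    (hmax : ∀ x y, u x - v y - (ε ^ 2)⁻¹ * ‖x - y‖ ^ 2
      ≤ u xb - v yb - (ε ^ 2)⁻¹ * ‖xb - yb‖ ^ 2)
    (a : EuclideanSpace ℝ (Fin d)) (ha : a = xb - yb)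
    (γ Ct₀ : ℝ) (hγ : γ ∈ Ioc (0:ℝ) 1) (hCt₀ : 0 < Ct₀)
    (j : EuclideanSpace ℝ (Fin d) → EuclideanSpace ℝ (Fin d) → EuclideanSpace ℝ (Fin d))
    (hj : Measurable (Function.uncurry j))
    (hlip' : ∀ x y z, z ∉ Metric.closedBall (0 : EuclideanSpace ℝ (Fin d)) 1 →
      ‖j x z - j y z‖ ≤ Ct₀ * ‖x - y‖ ^ γ)
    (μ : Measure (EuclideanSpace ℝ (Fin d)))
    (hμ : μ (Metric.closedBall (0 : EuclideanSpace ℝ (Fin d)) 1)ᶜ ≠ ⊤)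
    (hintu : IntegrableOn (fun z => u (xb + j xb z) - u xb)
      (Metric.closedBall (0 : EuclideanSpace ℝ (Fin d)) 1)ᶜ μ)
    (hintv : IntegrableOn (fun z => v (yb + j yb z) - v yb)
      (Metric.closedBall (0 : EuclideanSpace ℝ (Fin d)) 1)ᶜ μ) :
    (∫ z in (Metric.closedBall (0 : EuclideanSpace ℝ (Fin d)) 1)ᶜ,
        (u (xb + j xb z) - u xb) ∂μ)
      - ∫ z in (Metric.closedBall (0 : EuclideanSpace ℝ (Fin d)) 1)ᶜ,
          (v (yb + j yb z) - v yb) ∂μ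
    ≤ (Ct₀ ^ 2 * ‖a‖ ^ (2 * γ) + 2 * Ct₀ * ‖a‖ ^ (γ + 1)) * (ε ^ 2)⁻¹
        * (μ (Metric.closedBall (0 : EuclideanSpace ℝ (Fin d)) 1)ᶜ).toReal :=
  quadratic_estimate_tail_general u v ε xb yb hmax a ha γ Ct₀ hγ j hlip' μ hμ hintu hintv
end
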